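/- arXiv:2207.05033 — 5 statements merged into one kernel-verified Lean document; each statement's English description precedes it below -/
import Mathlib

section
/- Let h₀ ∈ (0, 2π), α > 0, T > 0, let k : [0, 2π] → (0, ∞) be twice continuously differentiable with k(0) = k(2π), k'(0) = k'(2π), and let φ : [−h₀, 2π] → [0, ∞) be twice continuously differentiable with ∫₀^{2π} φ(x) dx = 1 and φ(x) = φ(x + 2π) for x ∈ [−h₀, 0]. Suppose that for every h ∈ (0, h₀] there is a classical solution u_h ∈ C^{2,1}([0,2π] × [0,T]) of the distributed hypercycle problem with delay parameter h (i.e. ∂u_h/∂t = u_h·(k(x)·(u_h)_per(x−h,t) − ∫₀^{2π} k(ξ) u_h(ξ,t) (u_h)_per(ξ−h,t) dξ) + α ∂²u_h/∂x², u_h(x,0) = φ(x), u_h(0,t) = u_h(2π,t), ∂u_h/∂x(0,t) = ∂u_h/∂x(2π,t)), and that sup over h ∈ (0, h₀] of ‖u_h‖_{C^{2,1}} is finite, where ‖w‖_{C^{2,1}} = max over [0,2π]×[0,T] of (|w| + |∂w/∂x| + |∂²w/∂x²| + |∂w/∂t|). Then there exists h₁ ∈ (0, h₀] such that for all h ∈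 (0, h₁] and all (x,t) ∈ [0,2π] × [0,T], u_h(x,t) ≥ 0. -/
open Set MeasureTheory Real

noncomputable section

/-- Periodic extension of `u` in the spatial variable:
`uper u y t = u (y + 2π) t` if `y < 0` and `u y t` otherwise. -/
def uper (u : ℝ → ℝ → ℝ) (y t : ℝ) : ℝ := if y < 0 then u (y + 2 * π) t else u y t

/-- The mean fitness `f[u(·,t)] = ∫₀^{2π} k(ξ) u(ξ,t) u_per(ξ−h,t) dξ`. -/
def meanFitness (k : ℝ → ℝ) (hdel : ℝ) (u : ℝ → ℝ → ℝ) (t : ℝ) : ℝ :=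
  ∫ ξ in (0:ℝ)..(2 * π), k ξ * u ξ t * uper u (ξ - hdel) t

/-- `u`, together with the functions `ux, uxx, ut`, is of class `C^{2,1}` on
`[0,2π] × [0,T]`: `u, ux, uxx, ut` are continuous on the rectangle and `ux, uxx, ut`
are the indicated partial derivatives there. -/
structure IsC21 (T : ℝ) (u ux uxx ut : ℝ → ℝ → ℝ) : Prop where
  cont_u : ContinuousOn (fun p : ℝ × ℝ => u p.1 p.2) (Icc 0 (2 * π) ×ˢ Icc 0 T)
  cont_ux : ContinuousOn (fun p : ℝ × ℝ => ux p.1 p.2) (Icc 0 (2 * π) ×ˢ Icc 0 T)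
  cont_uxx : ContinuousOn (fun p : ℝ × ℝ => uxx p.1 p.2) (Icc 0 (2 * π) ×ˢ Icc 0 T)
  cont_ut : ContinuousOn (fun p : ℝ × ℝ => ut p.1 p.2) (Icc 0 (2 * π) ×ˢ Icc 0 T)
  hasDeriv_x : ∀ t ∈ Icc (0:ℝ) T, ∀ x ∈ Icc (0:ℝ) (2 * π),
    HasDerivWithinAt (fun y => u y t) (ux x t) (Icc 0 (2 * π)) x
  hasDeriv_xx : ∀ t ∈ Icc (0:ℝ) T, ∀ x ∈ Icc (0:ℝ) (2 * π),
    HasDerivWithinAt (fun y => ux y t) (uxx x t) (Icc 0 (2 * π)) x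
  hasDeriv_t : ∀ t ∈ Icc (0:ℝ) T, ∀ x ∈ Icc (0:ℝ) (2 * π),
    HasDerivWithinAt (fun s => u x s) (ut x t) (Icc 0 T) t

/-- `u` (with derivatives `ux, uxx, ut`) is a classical solution of the distributed
hypercycle problem on `[0,2π] × [0,T]` with delay `hdel`, diffusion `α`,
replication rate `k` and initial profile `φ`. -/
structure IsHypSol (hdel α T : ℝ) (k φ : ℝ → ℝ) (u ux uxx ut : ℝ → ℝ → ℝ) : Prop where
  c21 : IsC21 T u ux uxx ut
  pde : ∀ x ∈ Icc (0:ℝ) (2 * π), ∀ t ∈ Icc (0:ℝ) T,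
    ut x t = u x t * (k x * uper u (x - hdel) t - meanFitness k hdel u t) + α * uxx x t
  init : ∀ x ∈ Icc (0:ℝ) (2 * π), u x 0 = φ x
  bc0 : ∀ t ∈ Icc (0:ℝ) T, u 0 t = u (2 * π) t
  bc1 : ∀ t ∈ Icc (0:ℝ) T, ux 0 t = ux (2 * π) t


open Filter
section AuxMaxPrinciple

/-- If `f` has one-sided derivative `d` at the right endpoint `b` within `[a,b]`
and attains its minimum over `[a,b]` at `b`, then `d ≤ 0`. -/
lemma deriv_nonpos_of_min_right {f : ℝ → ℝ} {a b d : ℝ} (hab : a < b)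
    (hd : HasDerivWithinAt f d (Icc a b) b) (hmin : ∀ t ∈ Icc a b, f b ≤ f t) : d ≤ 0 := by
  have hs := hasDerivWithinAt_iff_tendsto_slope.mp hd
  rw [show Icc a b \ {b} = Ico a b from Icc_sdiff_right] at hs
  haveI : (nhdsWithin b (Ico a b)).NeBot := by
    apply mem_closure_iff_nhdsWithin_neBot.mp
    rw [closure_Ico hab.ne]
    exact right_mem_Icc.mpr hab.le
  refine le_of_tendsto hs ?_
  filter_upwards [self_mem_nhdsWithin] with x hx
  rw [slope_def_field]
  apply div_nonpos_of_nonneg_of_nonpos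
  · linarith [hmin x ⟨hx.1, hx.2.le⟩]
  · linarith [hx.2]

/-- If `f` has one-sided derivative `d` at the left endpoint `a` within `[a,b]`
and attains its minimum over `[a,b]` at `a`, then `0 ≤ d`. -/
lemma deriv_nonneg_of_min_left {f : ℝ → ℝ} {a b d : ℝ} (hab : a < b)
    (hd : HasDerivWithinAt f d (Icc a b) a) (hmin : ∀ t ∈ Icc a b, f a ≤ f t) : 0 ≤ d := by
  have hs := hasDerivWithinAt_iff_tendsto_slope.mp hd
  rw [show Icc a b \ {a} = Ioc a b from Icc_diff_left] at hs
  haveI : (nhdsWithin a (Ioc a b)).NeBot := by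
    apply mem_closure_iff_nhdsWithin_neBot.mp
    rw [closure_Ioc hab.ne]
    exact left_mem_Icc.mpr hab.le
  refine ge_of_tendsto hs ?_
  filter_upwards [self_mem_nhdsWithin] with x hx
  rw [slope_def_field]
  apply div_nonneg
  · linarith [hmin x ⟨hx.1.le, hx.2⟩]
  · linarith [hx.1]

/-- Second-derivative test at a minimum over `[a,b]` (including endpoints,
provided the first derivative vanishes there). -/
lemma second_deriv_nonneg_at_min {f f' : ℝ → ℝ} {a b x₀ d : ℝ} (hab : a < b)
    (hx₀ : x₀ ∈ Icc a b)
    (hf : ∀ x ∈ Icc a b, HasDerivWithinAt f (f' x) (Icc a b) x)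
    (hf' : HasDerivWithinAt f' d (Icc a b) x₀)
    (hmin : ∀ x ∈ Icc a b, f x₀ ≤ f x)
    (h0 : f' x₀ = 0) : 0 ≤ d := by
  by_contra hneg
  push_neg at hneg
  have hs := hasDerivWithinAt_iff_tendsto_slope.mp hf'
  have hev : ∀ᶠ x in nhdsWithin x₀ (Icc a b \ {x₀}), slope f' x₀ x < 0 :=
    hs.eventually_lt_const hneg
  rw [eventually_nhdsWithin_iff, Metric.eventually_nhds_iff] at hev
  obtain ⟨ε, hε, hball⟩ := hev
  have key : ∀ x ∈ Icc a b, x ≠ x₀ → dist x x₀ < ε → slope f' x₀ x < 0 :=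
    fun x hx hne hdist => hball hdist ⟨hx, by simp [hne]⟩
  rcases lt_or_eq_of_le hx₀.2 with hxb | hxb
  · -- x₀ < b : walk to the right
    set c := min (x₀ + ε/2) b with hc
    have hc1 : x₀ < c := lt_min (by linarith) hxb
    have hcb : c ≤ b := min_le_right _ _
    have hsub : Icc x₀ c ⊆ Icc a b := Icc_subset_Icc hx₀.1 hcb
    have hanti : StrictAntiOn f (Icc x₀ c) := by
      apply strictAntiOn_of_deriv_neg (convex_Icc _ _)
      · exact fun x hx => ((hf x (hsub hx)).continuousWithinAt).mono hsub
      · intro x hx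
        rw [interior_Icc] at hx
        have hxI : x ∈ Icc a b := hsub (Ioo_subset_Icc_self hx)
        have hmem : Icc a b ∈ nhds x :=
          Icc_mem_nhds (lt_of_le_of_lt hx₀.1 hx.1) (lt_of_lt_of_le hx.2 hcb)
        rw [((hf x hxI).hasDerivAt hmem).deriv]
        have hdist : dist x x₀ < ε := by
          rw [Real.dist_eq, abs_of_pos (sub_pos.mpr hx.1)]
          have : x < x₀ + ε/2 := lt_of_lt_of_le hx.2 (min_le_left _ _)
          linarith
        have hsl := key x hxI (ne_of_gt hx.1) hdist
        rw [slope_def_field, h0, sub_zero] at hsl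
        rcases div_neg_iff.mp hsl with ⟨_, h2⟩ | ⟨h1, _⟩
        · linarith [hx.1]
        · exact h1
    have h2 := hanti (left_mem_Icc.mpr hc1.le) (right_mem_Icc.mpr hc1.le) hc1
    linarith [hmin c (hsub (right_mem_Icc.mpr hc1.le))]
  · -- x₀ = b : walk to the left
    have hax : a < x₀ := hxb ▸ hab
    set c := max (x₀ - ε/2) a with hc
    have hc1 : c < x₀ := max_lt (by linarith) hax
    have hca : a ≤ c := le_max_right _ _
    have hsub : Icc c x₀ ⊆ Icc a b := Icc_subset_Icc hca hx₀.2
    have hmono : StrictMonoOn f (Icc c x₀) := by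
      apply strictMonoOn_of_deriv_pos (convex_Icc _ _)
      · exact fun x hx => ((hf x (hsub hx)).continuousWithinAt).mono hsub
      · intro x hx
        rw [interior_Icc] at hx
        have hxI : x ∈ Icc a b := hsub (Ioo_subset_Icc_self hx)
        have hmem : Icc a b ∈ nhds x :=
          Icc_mem_nhds (lt_of_le_of_lt hca hx.1) (lt_of_lt_of_le hx.2 hx₀.2)
        rw [((hf x hxI).hasDerivAt hmem).deriv]
        have hdist : dist x x₀ < ε := by
          rw [Real.dist_eq, abs_of_neg (sub_neg.mpr hx.2)]
          have : x₀ - ε/2 ≤ c := le_max_left _ _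
          linarith [hx.1]
        have hsl := key x hxI (ne_of_lt hx.2) hdist
        rw [slope_def_field, h0, sub_zero] at hsl
        rcases div_neg_iff.mp hsl with ⟨h1, _⟩ | ⟨_, h2⟩
        · exact h1
        · linarith [hx.2]
    have h2 := hmono (left_mem_Icc.mpr hc1.le) (right_mem_Icc.mpr hc1.le) hc1
    linarith [hmin c (hsub (left_mem_Icc.mpr hc1.le))]

end AuxMaxPrinciple

/-- Theorem 4 of the paper: nonnegativity of solutions of the
distributed hypercycle problem for sufficiently small delay `h`. -/
theorem stmt1 (h₀ α T : ℝ) (hh₀ : h₀ ∈ Ioo 0 (2 * π)) (hα : 0 < α) (hT : 0 < T)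
    (k φ : ℝ → ℝ)
    (hkC2 : ContDiffOn ℝ 2 k (Icc 0 (2 * π)))
    (hkpos : ∀ x ∈ Icc (0:ℝ) (2 * π), 0 < k x)
    (hkb : k 0 = k (2 * π))
    (hkb' : derivWithin k (Icc 0 (2 * π)) 0 = derivWithin k (Icc 0 (2 * π)) (2 * π))
    (hφC2 : ContDiffOn ℝ 2 φ (Icc (-h₀) (2 * π)))
    (hφnonneg : ∀ x ∈ Icc (-h₀) (2 * π), 0 ≤ φ x)
    (hφint : ∫ x in (0:ℝ)..(2 * π), φ x = 1)
    (hφper : ∀ x ∈ Icc (-h₀) 0, φ x = φ (x + 2 * π))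
    (u ux uxx ut : ℝ → ℝ → ℝ → ℝ)
    (hsol : ∀ h ∈ Ioc (0:ℝ) h₀, IsHypSol h α T k φ (u h) (ux h) (uxx h) (ut h))
    (hbdd : ∃ C : ℝ, ∀ h ∈ Ioc (0:ℝ) h₀, ∀ x ∈ Icc (0:ℝ) (2 * π), ∀ t ∈ Icc (0:ℝ) T,
      |u h x t| + |ux h x t| + |uxx h x t| + |ut h x t| ≤ C) :
    ∃ h₁ ∈ Ioc (0:ℝ) h₀, ∀ h ∈ Ioc (0:ℝ) h₁,
      ∀ x ∈ Icc (0:ℝ) (2 * π), ∀ t ∈ Icc (0:ℝ) T, 0 ≤ u h x t := by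
  obtain ⟨C₀, hC₀⟩ := hbdd
  obtain ⟨h0lt, h0lt2π⟩ := hh₀
  have hπ : (0:ℝ) < 2 * π := by positivity
  obtain ⟨K₀, hK₀⟩ :=
    (isCompact_Icc (a := (0:ℝ)) (b := 2 * π)).exists_bound_of_continuousOn hkC2.continuousOn
  set C : ℝ := max C₀ 0 with hCdef
  set K : ℝ := max K₀ 0 with hKdef
  have hCnn : 0 ≤ C := le_max_right _ _
  have hKnn : 0 ≤ K := le_max_right _ _
  set lam : ℝ := K * C + K * C * C * (2 * π) + 1 with hlamdef
  refine ⟨h₀, ⟨h0lt, le_refl _⟩, ?_⟩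
  intro h hh x hx t ht
  have sol := hsol h hh
  obtain ⟨hhpos, hhle⟩ := hh
  -- uniform bound on |u h|
  have hu_bd : ∀ x ∈ Icc (0:ℝ) (2 * π), ∀ t ∈ Icc (0:ℝ) T, |u h x t| ≤ C := by
    intro x hx t ht
    have h1 := hC₀ h ⟨hhpos, hhle⟩ x hx t ht
    have := abs_nonneg (ux h x t); have := abs_nonneg (uxx h x t); have := abs_nonneg (ut h x t)
    have : |u h x t| ≤ C₀ := by linarith
    exact le_trans this (le_max_left _ _)
  -- bound on the periodic extension
  have huper_bd : ∀ ξ ∈ Icc (0:ℝ) (2 * π), ∀ t ∈ Icc (0:ℝ) T, |uper (u h) (ξ - h) t| ≤ C := by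
    intro ξ hξ t ht
    rw [uper]
    split_ifs with hneg
    · exact hu_bd _ ⟨by linarith [hξ.1], by linarith⟩ t ht
    · exact hu_bd _ ⟨by linarith [not_lt.mp hneg], by linarith [hξ.2]⟩ t ht
  -- bound on k
  have hk_bd : ∀ ξ ∈ Icc (0:ℝ) (2 * π), |k ξ| ≤ K := fun ξ hξ =>
    le_trans (by simpa [Real.norm_eq_abs] using hK₀ ξ hξ) (le_max_left _ _)
  -- bound on the mean fitness
  have hF_bd : ∀ t ∈ Icc (0:ℝ) T, |meanFitness k h (u h) t| ≤ K * C * C * (2 * π) := by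
    intro t ht
    rw [meanFitness]
    have hb : ∀ ξ ∈ Set.uIoc (0:ℝ) (2 * π), ‖k ξ * u h ξ t * uper (u h) (ξ - h) t‖ ≤ K * C * C := by
      intro ξ hξ
      rw [Set.uIoc_of_le hπ.le] at hξ
      have hξI : ξ ∈ Icc (0:ℝ) (2 * π) := ⟨hξ.1.le, hξ.2⟩
      rw [Real.norm_eq_abs, abs_mul, abs_mul]
      have h1 : |k ξ| * |u h ξ t| ≤ K * C :=
        mul_le_mul (hk_bd ξ hξI) (hu_bd ξ hξI t ht) (abs_nonneg _) hKnn
      exact mul_le_mul h1 (huper_bd ξ hξI t ht) (abs_nonneg _) (by positivity)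
    have := intervalIntegral.norm_integral_le_of_norm_le_const hb
    rw [Real.norm_eq_abs] at this
    calc |∫ ξ in (0:ℝ)..(2 * π), k ξ * u h ξ t * uper (u h) (ξ - h) t|
        ≤ K * C * C * |2 * π - 0| := this
      _ = K * C * C * (2 * π) := by rw [sub_zero, abs_of_pos hπ]
  -- minimum of w = exp(-lam t) u over the rectangle
  set R : Set (ℝ × ℝ) := Icc (0:ℝ) (2 * π) ×ˢ Icc (0:ℝ) T with hRdef
  have hRcomp : IsCompact R := isCompact_Icc.prod isCompact_Icc
  have hRne : R.Nonempty := ⟨(0, 0), ⟨left_mem_Icc.mpr hπ.le, left_mem_Icc.mpr hT.le⟩⟩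
  set w : ℝ × ℝ → ℝ := fun p => Real.exp (-lam * p.2) * u h p.1 p.2 with hwdef
  have hwc : ContinuousOn w R :=
    ((Real.continuous_exp.comp (continuous_const.mul continuous_snd)).continuousOn).mul
      sol.c21.cont_u
  obtain ⟨p₀, hp₀R, hp₀min'⟩ := hRcomp.exists_isMinOn hRne hwc
  have hp₀min : ∀ q ∈ R, w p₀ ≤ w q := fun q hq => hp₀min' hq
  obtain ⟨x₀, t₀⟩ := p₀
  obtain ⟨hx₀', ht₀'⟩ := hp₀R
  have hx₀ : x₀ ∈ Icc (0:ℝ) (2 * π) := hx₀'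
  have ht₀ : t₀ ∈ Icc (0:ℝ) T := ht₀'
  have hm' : Real.exp (-lam * t₀) * u h x₀ t₀ = w (x₀, t₀) := rfl
  -- it suffices that the minimum is nonneg
  rcases le_or_gt 0 (w (x₀, t₀)) with hm | hm
  · have h1 := hp₀min (x, t) ⟨hx, ht⟩
    have h2 : 0 ≤ Real.exp (-lam * t) * u h x t := le_trans hm h1
    nlinarith [Real.exp_pos (-lam * t)]
  exfalso
  rw [← hm'] at hm
  have hu0 : u h x₀ t₀ < 0 := by
    nlinarith [Real.exp_pos (-lam * t₀)]
  -- t₀ > 0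
  have hx₀φ : x₀ ∈ Icc (-h₀) (2 * π) := ⟨by linarith [hx₀.1], hx₀.2⟩
  have ht₀pos : 0 < t₀ := by
    rcases eq_or_lt_of_le ht₀.1 with h0 | h0
    · exfalso
      have := sol.init x₀ hx₀
      rw [← h0] at hu0
      rw [this] at hu0
      linarith [hφnonneg x₀ hx₀φ]
    · exact h0
  -- spatial minimum at x₀
  have hgmin : ∀ y ∈ Icc (0:ℝ) (2 * π), u h x₀ t₀ ≤ u h y t₀ := by
    intro y hy
    have := hp₀min (y, t₀) ⟨hy, ht₀⟩
    exact le_of_mul_le_mul_left this (Real.exp_pos _)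
  -- the spatial derivative vanishes at x₀
  have hd0 : ux h x₀ t₀ = 0 := by
    rcases eq_or_lt_of_le hx₀.1 with h0x | h0x
    · -- x₀ = 0
      have e1 : 0 ≤ ux h 0 t₀ :=
        deriv_nonneg_of_min_left hπ (sol.c21.hasDeriv_x t₀ ht₀ 0 (left_mem_Icc.mpr hπ.le))
          (fun y hy => by rw [h0x]; exact hgmin y hy)
      have e2 : ux h (2 * π) t₀ ≤ 0 :=
        deriv_nonpos_of_min_right hπ (sol.c21.hasDeriv_x t₀ ht₀ (2 * π) (right_mem_Icc.mpr hπ.le))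
          (fun y hy => by rw [← sol.bc0 t₀ ht₀, h0x]; exact hgmin y hy)
      rw [← h0x]
      linarith [sol.bc1 t₀ ht₀]
    rcases eq_or_lt_of_le hx₀.2 with hxb | hxb
    · -- x₀ = 2π
      have e2 : ux h (2 * π) t₀ ≤ 0 :=
        deriv_nonpos_of_min_right hπ (sol.c21.hasDeriv_x t₀ ht₀ (2 * π) (right_mem_Icc.mpr hπ.le))
          (fun y hy => by rw [← hxb]; exact hgmin y hy)
      have e1 : 0 ≤ ux h 0 t₀ :=
        deriv_nonneg_of_min_left hπ (sol.c21.hasDeriv_x t₀ ht₀ 0 (left_mem_Icc.mpr hπ.le))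
          (fun y hy => by rw [sol.bc0 t₀ ht₀, ← hxb]; exact hgmin y hy)
      rw [hxb]
      linarith [sol.bc1 t₀ ht₀]
    · -- interior
      have hmem : Icc (0:ℝ) (2 * π) ∈ nhds x₀ := Icc_mem_nhds h0x hxb
      have hda : HasDerivAt (fun y => u h y t₀) (ux h x₀ t₀) x₀ :=
        (sol.c21.hasDeriv_x t₀ ht₀ x₀ hx₀).hasDerivAt hmem
      have hloc : IsLocalMin (fun y => u h y t₀) x₀ := by
        filter_upwards [hmem] with y hy using hgmin y hy
      exact hloc.hasDerivAt_eq_zero hda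
  -- second derivative nonneg at x₀
  have huxx : 0 ≤ uxx h x₀ t₀ :=
    second_deriv_nonneg_at_min hπ hx₀ (fun y hy => sol.c21.hasDeriv_x t₀ ht₀ y hy)
      (sol.c21.hasDeriv_xx t₀ ht₀ x₀ hx₀) hgmin hd0
  -- time derivative at t₀
  have hexp : HasDerivAt (fun s : ℝ => Real.exp (-lam * s)) (Real.exp (-lam * t₀) * (-lam)) t₀ := by
    have hin : HasDerivAt (fun s : ℝ => -lam * s) (-lam) t₀ := by
      simpa using (hasDerivAt_id t₀).const_mul (-lam)
    exact hin.exp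
  have hψ : HasDerivWithinAt (fun s => Real.exp (-lam * s) * u h x₀ s)
      (Real.exp (-lam * t₀) * (-lam) * u h x₀ t₀ + Real.exp (-lam * t₀) * ut h x₀ t₀)
      (Icc 0 t₀) t₀ :=
    (hexp.hasDerivWithinAt.mul (sol.c21.hasDeriv_t t₀ ht₀ x₀ hx₀)).mono
      (Icc_subset_Icc_right ht₀.2)
  have hψmin : ∀ s ∈ Icc (0:ℝ) t₀, Real.exp (-lam * t₀) * u h x₀ t₀ ≤
      Real.exp (-lam * s) * u h x₀ s := by
    intro s hs
    exact hp₀min (x₀, s) ⟨hx₀, ⟨hs.1, le_trans hs.2 ht₀.2⟩⟩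
  have hdle := deriv_nonpos_of_min_right ht₀pos hψ hψmin
  have hut : ut h x₀ t₀ ≤ lam * u h x₀ t₀ := by
    nlinarith [Real.exp_pos (-lam * t₀)]
  -- use the PDE
  have hpde := sol.pde x₀ hx₀ t₀ ht₀
  set c : ℝ := k x₀ * uper (u h) (x₀ - h) t₀ - meanFitness k h (u h) t₀ with hcdef
  have hc_le : c ≤ lam - 1 := by
    have h1 : k x₀ * uper (u h) (x₀ - h) t₀ ≤ K * C := by
      calc k x₀ * uper (u h) (x₀ - h) t₀ ≤ |k x₀ * uper (u h) (x₀ - h) t₀| := le_abs_self _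
        _ = |k x₀| * |uper (u h) (x₀ - h) t₀| := abs_mul _ _
        _ ≤ K * C := mul_le_mul (hk_bd x₀ hx₀) (huper_bd x₀ hx₀ t₀ ht₀) (abs_nonneg _) hKnn
    have h2 : -meanFitness k h (u h) t₀ ≤ K * C * C * (2 * π) := by
      have := hF_bd t₀ ht₀
      have := neg_le_abs (meanFitness k h (u h) t₀)
      linarith
    rw [hlamdef]
    linarith
  have hcu : u h x₀ t₀ * c ≤ ut h x₀ t₀ := by
    rw [hpde]
    nlinarith [mul_nonneg hα.le huxx]
  -- final contradiction
  nlinarith [mul_pos_of_neg_of_neg hu0 (show c - lam < 0 by linarith)]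
end
end

section
/- Let h ∈ (0, 2π), α > 0, T > 0, let k : [0, 2π] → (0, ∞) be twice continuously differentiable with k(0) = k(2π), k'(0) = k'(2π), and let φ : [−h, 2π] → [0, ∞) be twice continuously differentiable with ∫₀^{2π} φ(x) dx = 1 and φ(x) = φ(x + 2π) for x ∈ [−h, 0]. For w ∈ C^{2,1}([0,2π]×[0,T]) with w(0,t) = w(2π,t), define the nonlinear operator F by (F w)(x,t) = w(x,t)·(k(x)·w_per(x−h,t) − ∫₀^{2π} k(ξ) w(ξ,t) w_per(ξ−h,t) dξ), where w_per(y,t) = w(y+2π,t) for y < 0 and w(y,t) for y ≥ 0. Suppose u⁰(x,t) = φ(x) and for each m ≥ 0, u^{m+1} ∈ C^{2,1}([0,2π]×[0,T]) is a classical solution of the linear problem ∂u^{m+1}/∂t − α ∂²u^{m+1}/∂x² = F u^m on [0,2π]×[0,T] with u^{m+1}(x,0) = φ(x), u^{m+1}(0,t) = u^{m+1}(2π,t), and ∂u^{m+1}/∂x(0,t) = ∂u^{m+1}/∂x(2π,t). Then there exists ε > 0 (depending on h, α, T, φ) such that if k̄ := max_{x∈[0,2π]} max{|k(x)|, |k'(x)|,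 |k''(x)|} ≤ ε, the sequence of norms ‖u^m‖_{C^{2,1}([0,2π]×[0,T])}, m = 0, 1, 2, …, is uniformly bounded. -/
open Set MeasureTheory Real

noncomputable section

/-- The nonlinear reaction operator
`(F w)(x,t) = w(x,t)·(k(x)·w_per(x−h,t) − ∫₀^{2π} k(ξ) w(ξ,t) w_per(ξ−h,t) dξ)`. -/
def Fop (k : ℝ → ℝ) (hdel : ℝ) (w : ℝ → ℝ → ℝ) (x t : ℝ) : ℝ :=
  w x t * (k x * uper w (x - hdel) t - meanFitness k hdel w t)

section Helpers

open Filter Topology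

lemma deriv_nonpos_of_max {a b p : ℝ} {f : ℝ → ℝ} {f' : ℝ}
    (hp : p ∈ Icc a b) (hpb : p < b)
    (hf : HasDerivWithinAt f f' (Icc a b) p)
    (hmax : ∀ x ∈ Icc a b, f x ≤ f p) : f' ≤ 0 := by
  have hsub : Icc p b ⊆ Icc a b := Icc_subset_Icc hp.1 le_rfl
  have hf' : HasDerivWithinAt f f' (Icc p b) p := hf.mono hsub
  have hs := hasDerivWithinAt_iff_tendsto_slope.1 hf'
  have hne : (𝓝[Icc p b \ {p}] p).NeBot := by
    have h1 : (𝓝[Ioc p b] p).NeBot := by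
      refine mem_closure_iff_nhdsWithin_neBot.1 ?_
      rw [closure_Ioc hpb.ne]
      exact ⟨le_rfl, hpb.le⟩
    exact h1.mono (nhdsWithin_mono _ (fun x hx => ⟨⟨hx.1.le, hx.2⟩, ne_of_gt hx.1⟩))
  refine le_of_tendsto hs ?_
  filter_upwards [self_mem_nhdsWithin] with x hx
  rcases hx with ⟨hx1, hx2⟩
  rw [slope_def_field]
  apply div_nonpos_of_nonpos_of_nonneg
  · exact sub_nonpos.2 (hmax x (hsub hx1))
  · exact sub_nonneg.2 hx1.1

lemma deriv_nonneg_of_max {a b p : ℝ} {f : ℝ → ℝ} {f' : ℝ}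
    (hp : p ∈ Icc a b) (hap : a < p)
    (hf : HasDerivWithinAt f f' (Icc a b) p)
    (hmax : ∀ x ∈ Icc a b, f x ≤ f p) : 0 ≤ f' := by
  have hsub : Icc a p ⊆ Icc a b := Icc_subset_Icc le_rfl hp.2
  have hf' : HasDerivWithinAt f f' (Icc a p) p := hf.mono hsub
  have hs := hasDerivWithinAt_iff_tendsto_slope.1 hf'
  have hne : (𝓝[Icc a p \ {p}] p).NeBot := by
    have h1 : (𝓝[Ico a p] p).NeBot := by
      refine mem_closure_iff_nhdsWithin_neBot.1 ?_
      rw [closure_Ico hap.ne]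
      exact ⟨hap.le, le_rfl⟩
    exact h1.mono (nhdsWithin_mono _ (fun x hx => ⟨⟨hx.1, hx.2.le⟩, ne_of_lt hx.2⟩))
  refine ge_of_tendsto hs ?_
  filter_upwards [self_mem_nhdsWithin] with x hx
  rcases hx with ⟨hx1, hx2⟩
  rw [slope_def_field]
  apply div_nonneg_of_nonpos
  · exact sub_nonpos.2 (hmax x (hsub hx1))
  · exact sub_nonpos.2 hx1.2

lemma second_deriv_nonpos_of_max {a b p : ℝ} {f f1 f2 : ℝ → ℝ}
    (hp : p ∈ Ioc a b)
    (hf1 : ∀ x ∈ Icc a b, HasDerivWithinAt f (f1 x) (Icc a b) x)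
    (hf2 : ∀ x ∈ Icc a b, HasDerivWithinAt f1 (f2 x) (Icc a b) x)
    (hcont : ContinuousOn f2 (Icc a b))
    (hmax : ∀ x ∈ Icc a b, f x ≤ f p)
    (hf1p : f1 p ≤ 0) : f2 p ≤ 0 := by
  by_contra hpos
  push_neg at hpos
  have hpIcc : p ∈ Icc a b := ⟨hp.1.le, hp.2⟩
  have hcw : ContinuousWithinAt f2 (Icc a b) p := hcont p hpIcc
  have hev : ∀ᶠ x in 𝓝[Icc a b] p, 0 < f2 x := hcw.eventually_const_lt hpos
  rcases Metric.mem_nhdsWithin_iff.1 hev with ⟨r, hr, hball⟩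
  obtain ⟨δ, hδ0, hδ1, hδ2⟩ : ∃ δ : ℝ, 0 < δ ∧ a < p - δ ∧ δ < r := by
    have hpa : a < p := hp.1
    refine ⟨min ((p - a)/2) (r/2), lt_min (by linarith) (by linarith), ?_, ?_⟩
    · nlinarith [min_le_left ((p-a)/2) (r/2)]
    · nlinarith [min_le_right ((p-a)/2) (r/2)]
  have hIccsub : Icc (p - δ) p ⊆ Icc a b := Icc_subset_Icc hδ1.le hp.2
  have hpos2 : ∀ x ∈ Icc (p - δ) p, 0 < f2 x := by
    intro x hx
    have hxb : x ∈ Metric.ball p r := by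
      rw [Metric.mem_ball, Real.dist_eq, abs_lt]
      constructor <;> nlinarith [hx.1, hx.2]
    exact hball ⟨hxb, hIccsub hx⟩
  have hint : Ioo (p - δ) p ⊆ interior (Icc a b) := by
    rw [interior_Icc]
    exact fun x hx => ⟨lt_trans hδ1 hx.1, lt_of_lt_of_le hx.2 hp.2⟩
  have hintmem : ∀ x ∈ Ioo (p - δ) p, HasDerivAt f1 (f2 x) x := by
    intro x hx
    exact (hf2 x (hIccsub ⟨hx.1.le, hx.2.le⟩)).hasDerivAt
      (mem_interior_iff_mem_nhds.1 (hint hx))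
  have hf1cont : ContinuousOn f1 (Icc (p - δ) p) := fun x hx =>
    ((hf2 x (hIccsub hx)).differentiableWithinAt.continuousWithinAt).mono hIccsub
  have hmono : StrictMonoOn f1 (Icc (p - δ) p) := by
    apply strictMonoOn_of_deriv_pos (convex_Icc _ _) hf1cont
    intro x hx
    rw [interior_Icc] at hx
    rw [(hintmem x hx).deriv]
    exact hpos2 x ⟨hx.1.le, hx.2.le⟩
  have hf1neg : ∀ x ∈ Ioo (p - δ) p, deriv f x < 0 := by
    intro x hx
    have hx' : x ∈ Icc (p - δ) p := ⟨hx.1.le, hx.2.le⟩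
    have h1 : f1 x < f1 p := hmono hx' (right_mem_Icc.2 (by linarith)) hx.2
    have hfd : HasDerivAt f (f1 x) x := (hf1 x (hIccsub hx')).hasDerivAt
      (mem_interior_iff_mem_nhds.1 (hint hx))
    rw [hfd.deriv]
    exact lt_of_lt_of_le h1 hf1p
  have hfcont : ContinuousOn f (Icc (p - δ) p) := fun x hx =>
    ((hf1 x (hIccsub hx)).differentiableWithinAt.continuousWithinAt).mono hIccsub
  have hanti : StrictAntiOn f (Icc (p - δ) p) := by
    apply strictAntiOn_of_deriv_neg (convex_Icc _ _) hfcont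
    intro x hx; rw [interior_Icc] at hx; exact hf1neg x hx
  have hlt : f p < f (p - δ) :=
    hanti (left_mem_Icc.2 (by linarith)) (right_mem_Icc.2 (by linarith)) (by linarith)
  exact absurd (hmax (p - δ) (hIccsub (left_mem_Icc.2 (by linarith)))) (not_le.2 hlt)

lemma maxPrinciple {T' αc : ℝ} (hT' : 0 < T') (hα : 0 < αc)
    {w wx wxx wt g : ℝ → ℝ → ℝ} {M G : ℝ} (hG : 0 ≤ G)
    (hC : IsC21 T' w wx wxx wt)
    (hper : ∀ t ∈ Icc (0:ℝ) T', w 0 t = w (2*π) t)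
    (hperx : ∀ t ∈ Icc (0:ℝ) T', wx 0 t = wx (2*π) t)
    (hpde : ∀ x ∈ Icc (0:ℝ) (2*π), ∀ t ∈ Icc (0:ℝ) T', wt x t - αc * wxx x t = g x t)
    (hg : ∀ x ∈ Icc (0:ℝ) (2*π), ∀ t ∈ Icc (0:ℝ) T', g x t ≤ G)
    (hM : ∀ x ∈ Icc (0:ℝ) (2*π), w x 0 ≤ M) :
    ∀ x ∈ Icc (0:ℝ) (2*π), ∀ t ∈ Icc (0:ℝ) T', w x t ≤ M + T' * G := by
  have h2π : (0:ℝ) < 2*π := by positivity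
  intro x hx t ht
  have key : ∀ η > (0:ℝ), w x t - (G+η)*t ≤ M := by
    intro η hη
    set K : Set (ℝ × ℝ) := Icc (0:ℝ) (2*π) ×ˢ Icc (0:ℝ) T' with hK
    have hKc : IsCompact K := isCompact_Icc.prod isCompact_Icc
    have hKne : K.Nonempty := ⟨(0,0), ⟨⟨le_rfl, h2π.le⟩, ⟨le_rfl, hT'.le⟩⟩⟩
    have hΦcont : ContinuousOn (fun p : ℝ × ℝ => w p.1 p.2 - (G+η)*p.2) K :=
      hC.cont_u.sub ((continuous_const.mul continuous_snd).continuousOn)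
    obtain ⟨p₀, hp₀K, hp₀max⟩ := hKc.exists_isMaxOn hKne hΦcont
    rw [isMaxOn_iff] at hp₀max
    suffices hS : w p₀.1 p₀.2 - (G+η)*p₀.2 ≤ M by
      have := hp₀max (x, t) ⟨hx, ht⟩
      simp only at this
      linarith
    by_contra hgt
    push_neg at hgt
    obtain ⟨hx₀, ht₀⟩ := hp₀K
    have ht₀0 : p₀.2 ≠ 0 := by
      intro h0
      rw [h0] at hgt
      have := hM p₀.1 hx₀
      simp at hgt
      linarith
    have ht₀mem : p₀.2 ∈ Ioc (0:ℝ) T' := ⟨lt_of_le_of_ne ht₀.1 (Ne.symm ht₀0), ht₀.2⟩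
    set t₀ := p₀.2
    set p1 : ℝ := if p₀.1 = 0 then 2*π else p₀.1 with hp1def
    have hwp1 : w p1 t₀ = w p₀.1 t₀ := by
      by_cases hc : p₀.1 = 0
      · simp [hp1def, hc, (hper t₀ ht₀).symm]
      · simp [hp1def, hc]
    have hp1mem : p1 ∈ Ioc (0:ℝ) (2*π) := by
      by_cases hc : p₀.1 = 0
      · simp [hp1def, hc, h2π]
      · simp only [hp1def, hc, if_false]
        exact ⟨lt_of_le_of_ne hx₀.1 (Ne.symm hc), hx₀.2⟩
    have hp1Icc : p1 ∈ Icc (0:ℝ) (2*π) := ⟨hp1mem.1.le, hp1mem.2⟩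
    -- max in x at time t₀
    have hmx : ∀ y ∈ Icc (0:ℝ) (2*π), w y t₀ ≤ w p1 t₀ := by
      intro y hy
      have := hp₀max (y, t₀) ⟨hy, ht₀⟩
      simp only at this
      rw [hwp1]; linarith
    -- wx p1 t₀ ≤ 0
    have hwx : wx p1 t₀ ≤ 0 := by
      by_cases hc : p1 = 2*π
      · have h0max : ∀ y ∈ Icc (0:ℝ) (2*π), w y t₀ ≤ w 0 t₀ := by
          intro y hy
          rw [hper t₀ ht₀, ← hc]
          exact hmx y hy
        have := deriv_nonpos_of_max (left_mem_Icc.2 h2π.le) h2π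
          (hC.hasDeriv_x t₀ ht₀ 0 (left_mem_Icc.2 h2π.le)) h0max
        rwa [hperx t₀ ht₀, ← hc] at this
      · exact deriv_nonpos_of_max hp1Icc (lt_of_le_of_ne hp1Icc.2 hc)
          (hC.hasDeriv_x t₀ ht₀ p1 hp1Icc) hmx
    -- wxx p1 t₀ ≤ 0
    have hwxx : wxx p1 t₀ ≤ 0 := by
      refine second_deriv_nonpos_of_max (f := fun y => w y t₀) (f1 := fun y => wx y t₀)
        (f2 := fun y => wxx y t₀) (p := p1) hp1mem
        (fun y hy => hC.hasDeriv_x t₀ ht₀ y hy)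
        (fun y hy => hC.hasDeriv_xx t₀ ht₀ y hy) ?_ hmx hwx
      have : ContinuousOn (fun y : ℝ => (y, t₀)) (Icc 0 (2*π)) :=
        (continuous_id.prodMk continuous_const).continuousOn
      exact hC.cont_uxx.comp this (fun y hy => ⟨hy, ht₀⟩)
    -- wt p1 t₀ ≥ G + η
    have hwt : G + η ≤ wt p1 t₀ := by
      have hder : HasDerivWithinAt (fun s => w p1 s - (G+η)*s)
          (wt p1 t₀ - (G+η)) (Icc 0 T') t₀ := by
        have h1 := hC.hasDeriv_t t₀ ht₀ p1 hp1Icc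
        have h2 : HasDerivWithinAt (fun s : ℝ => (G+η)*s) (G+η) (Icc 0 T') t₀ := by
          simpa using (hasDerivWithinAt_id t₀ (Icc (0:ℝ) T')).const_mul (G+η)
        exact h1.sub h2
      have hmt : ∀ s ∈ Icc (0:ℝ) T', w p1 s - (G+η)*s ≤ w p1 t₀ - (G+η)*t₀ := by
        intro s hs
        have := hp₀max (p1, s) ⟨hp1Icc, hs⟩
        simp only at this
        rw [hwp1]; linarith
      have := deriv_nonneg_of_max ht₀ ht₀mem.1 hder hmt
      linarith
    have hpde1 := hpde p1 hp1Icc t₀ ht₀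
    have hg1 := hg p1 hp1Icc t₀ ht₀
    nlinarith
  have htle : t ≤ T' := ht.2
  have ht0 : 0 ≤ t := ht.1
  refine le_of_forall_pos_le_add ?_
  intro η hη
  have := key (η/T') (by positivity)
  have h1 : (G + η/T')*t ≤ (G + η/T')*T' := by
    apply mul_le_mul_of_nonneg_left htle
    positivity
  have h2 : (G + η/T')*T' = G*T' + η := by
    field_simp
  nlinarith

lemma IsC21.neg {T : ℝ} {u ux uxx ut : ℝ → ℝ → ℝ} (h : IsC21 T u ux uxx ut) :
    IsC21 T (fun x t => -u x t) (fun x t => -ux x t) (fun x t => -uxx x t)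
      (fun x t => -ut x t) where
  cont_u := h.cont_u.neg
  cont_ux := h.cont_ux.neg
  cont_uxx := h.cont_uxx.neg
  cont_ut := h.cont_ut.neg
  hasDeriv_x := fun t ht x hx => (h.hasDeriv_x t ht x hx).neg
  hasDeriv_xx := fun t ht x hx => (h.hasDeriv_xx t ht x hx).neg
  hasDeriv_t := fun t ht x hx => (h.hasDeriv_t t ht x hx).neg

lemma maxPrinciple_abs {T' αc : ℝ} (hT' : 0 < T') (hα : 0 < αc)
    {w wx wxx wt g : ℝ → ℝ → ℝ} {M G : ℝ} (hG : 0 ≤ G)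
    (hC : IsC21 T' w wx wxx wt)
    (hper : ∀ t ∈ Icc (0:ℝ) T', w 0 t = w (2*π) t)
    (hperx : ∀ t ∈ Icc (0:ℝ) T', wx 0 t = wx (2*π) t)
    (hpde : ∀ x ∈ Icc (0:ℝ) (2*π), ∀ t ∈ Icc (0:ℝ) T', wt x t - αc * wxx x t = g x t)
    (hg : ∀ x ∈ Icc (0:ℝ) (2*π), ∀ t ∈ Icc (0:ℝ) T', |g x t| ≤ G)
    (hM : ∀ x ∈ Icc (0:ℝ) (2*π), |w x 0| ≤ M) :
    ∀ x ∈ Icc (0:ℝ) (2*π), ∀ t ∈ Icc (0:ℝ) T', |w x t| ≤ M + T' * G := by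
  intro x hx t ht
  have h1 : w x t ≤ M + T' * G := by
    refine maxPrinciple hT' hα hG hC hper hperx hpde
      (fun y hy s hs => (abs_le.1 (hg y hy s hs)).2)
      (fun y hy => (abs_le.1 (hM y hy)).2) x hx t ht
  have h2 : -w x t ≤ M + T' * G := by
    refine maxPrinciple (g := fun y s => -(g y s)) hT' hα hG hC.neg
      (fun s hs => by simp only [neg_inj]; exact hper s hs)
      (fun s hs => by simp only [neg_inj]; exact hperx s hs)
      (fun y hy s hs => by
        have := hpde y hy s hs
        show -wt y s - αc * -wxx y s = -(g y s)
        linarith)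
      (fun y hy s hs => by
        have := (abs_le.1 (hg y hy s hs)).1
        show -(g y s) ≤ G
        linarith)
      (fun y hy => by
        have := (abs_le.1 (hM y hy)).1
        show -w y 0 ≤ M
        linarith) x hx t ht
  exact abs_le.2 ⟨by linarith, h1⟩

lemma abs_uper_le {w : ℝ → ℝ → ℝ} {B t hdel x : ℝ} (hh : hdel ∈ Ioo 0 (2*π))
    (hx : x ∈ Icc (0:ℝ) (2*π)) (hw : ∀ y ∈ Icc (0:ℝ) (2*π), |w y t| ≤ B) :
    |uper w (x - hdel) t| ≤ B := by
  unfold uper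
  split_ifs with hc
  · exact hw _ ⟨by linarith [hx.1, hh.2], by linarith [hx.2, hh.1]⟩
  · exact hw _ ⟨by linarith [not_lt.1 hc], by linarith [hx.2, hh.1]⟩

lemma abs_meanFitness_le {k : ℝ → ℝ} {w : ℝ → ℝ → ℝ} {ε B t hdel : ℝ}
    (hh : hdel ∈ Ioo 0 (2*π)) (hε : 0 ≤ ε) (hB : 0 ≤ B)
    (hk : ∀ x ∈ Icc (0:ℝ) (2*π), |k x| ≤ ε)
    (hw : ∀ y ∈ Icc (0:ℝ) (2*π), |w y t| ≤ B) :
    |meanFitness k hdel w t| ≤ ε*B*B*(2*π) := by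
  have h2π : (0:ℝ) < 2*π := by positivity
  unfold meanFitness
  have := intervalIntegral.norm_integral_le_of_norm_le_const
    (a := 0) (b := 2*π) (C := ε*B*B)
    (f := fun ξ => k ξ * w ξ t * uper w (ξ - hdel) t) ?_
  · rw [Real.norm_eq_abs] at this
    calc |∫ ξ in (0:ℝ)..(2*π), k ξ * w ξ t * uper w (ξ - hdel) t| ≤ ε*B*B*|2*π - 0| := this
    _ = ε*B*B*(2*π) := by rw [sub_zero, abs_of_pos h2π]
  · intro ξ hξ
    rw [uIoc_of_le h2π.le] at hξ
    have hξI : ξ ∈ Icc (0:ℝ) (2*π) := ⟨hξ.1.le, hξ.2⟩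
    rw [Real.norm_eq_abs, abs_mul, abs_mul]
    have h1 := hk ξ hξI
    have h2 := hw ξ hξI
    have h3 := abs_uper_le hh hξI hw
    have p1 : |k ξ| * |w ξ t| ≤ ε * B := mul_le_mul h1 h2 (abs_nonneg _) hε
    exact mul_le_mul p1 h3 (abs_nonneg _) (by positivity)

lemma abs_Fop_le {k : ℝ → ℝ} {w : ℝ → ℝ → ℝ} {ε B t hdel x : ℝ}
    (hh : hdel ∈ Ioo 0 (2*π)) (hε : 0 ≤ ε) (hB : 0 ≤ B)
    (hx : x ∈ Icc (0:ℝ) (2*π))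
    (hk : ∀ y ∈ Icc (0:ℝ) (2*π), |k y| ≤ ε)
    (hw : ∀ y ∈ Icc (0:ℝ) (2*π), |w y t| ≤ B) :
    |Fop k hdel w x t| ≤ ε*(B^2 + 2*π*B^3) := by
  unfold Fop
  rw [abs_mul]
  have h1 := hw x hx
  have h2 := hk x hx
  have h3 := abs_uper_le hh hx hw
  have h4 := abs_meanFitness_le hh hε hB hk hw
  have h5 : |k x * uper w (x - hdel) t - meanFitness k hdel w t| ≤
      ε*B + ε*B*B*(2*π) := by
    refine (abs_sub _ _).trans ?_
    rw [abs_mul]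
    have := abs_nonneg (k x)
    have := abs_nonneg (uper w (x - hdel) t)
    nlinarith
  have := abs_nonneg (w x t)
  have := abs_nonneg (k x * uper w (x - hdel) t - meanFitness k hdel w t)
  nlinarith [Real.pi_pos]

lemma integrable_mf_integrand {k : ℝ → ℝ} {w : ℝ → ℝ → ℝ} {T t hdel : ℝ}
    (hh : hdel ∈ Ioo 0 (2*π)) (ht : t ∈ Icc (0:ℝ) T)
    (hk : ContinuousOn k (Icc 0 (2*π)))
    (hw : ContinuousOn (fun p : ℝ × ℝ => w p.1 p.2) (Icc 0 (2*π) ×ˢ Icc 0 T)) :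
    IntervalIntegrable (fun ξ => k ξ * w ξ t * uper w (ξ - hdel) t) volume 0 (2*π) := by
  have h2π : (0:ℝ) < 2*π := by positivity
  set f : ℝ → ℝ := fun ξ => k ξ * w ξ t * uper w (ξ - hdel) t with hf
  have hwt : ContinuousOn (fun ξ => w ξ t) (Icc 0 (2*π)) := by
    have hmap : ∀ ξ ∈ Icc (0:ℝ) (2*π), (ξ, t) ∈ Icc (0:ℝ) (2*π) ×ˢ Icc (0:ℝ) T :=
      fun ξ hξ => ⟨hξ, ht⟩
    exact hw.comp ((continuous_id.prodMk continuous_const).continuousOn) hmap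
  -- piece 1 : on Ioo 0 hdel
  have hg1 : ContinuousOn (fun ξ => k ξ * w ξ t * w (ξ - hdel + 2*π) t) (Icc 0 hdel) := by
    have hs1 : Icc (0:ℝ) hdel ⊆ Icc 0 (2*π) := Icc_subset_Icc le_rfl hh.2.le
    refine ((hk.mono hs1).mul (hwt.mono hs1)).mul ?_
    refine hwt.comp ((continuous_id.sub continuous_const).add continuous_const).continuousOn ?_
    intro ξ hξ
    exact ⟨by simp; linarith [hξ.1, hh.2], by simp; linarith [hξ.2, hh.1]⟩
  have hint1 : IntegrableOn f (Ioo 0 hdel) := by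
    refine (IntegrableOn.congr_fun (f := fun ξ => k ξ * w ξ t * w (ξ - hdel + 2*π) t)
      ((hg1.integrableOn_Icc).mono_set Ioo_subset_Icc_self) ?_ measurableSet_Ioo)
    intro ξ hξ
    have : ξ - hdel < 0 := by linarith [hξ.2]
    simp only [hf, uper, if_pos this]
  -- piece 2 : on Icc hdel 2π
  have hg2 : ContinuousOn (fun ξ => k ξ * w ξ t * w (ξ - hdel) t) (Icc hdel (2*π)) := by
    have hs2 : Icc hdel (2*π) ⊆ Icc 0 (2*π) := Icc_subset_Icc hh.1.le le_rfl
    refine ((hk.mono hs2).mul (hwt.mono hs2)).mul ?_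
    refine hwt.comp (continuous_id.sub continuous_const).continuousOn ?_
    intro ξ hξ
    exact ⟨by simp; linarith [hξ.1], by simp; linarith [hξ.2, hh.1]⟩
  have hint2 : IntegrableOn f (Icc hdel (2*π)) := by
    refine (IntegrableOn.congr_fun (f := fun ξ => k ξ * w ξ t * w (ξ - hdel) t)
      hg2.integrableOn_Icc ?_ measurableSet_Icc)
    intro ξ hξ
    have : ¬ (ξ - hdel < 0) := by push_neg; linarith [hξ.1]
    simp only [hf, uper, if_neg this]
  have hunion : IntegrableOn f (Ioo 0 hdel ∪ Icc hdel (2*π)) := hint1.union hint2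
  have hseteq : Ioo 0 hdel ∪ Icc hdel (2*π) = Ioc 0 (2*π) := by
    ext y
    simp only [mem_union, mem_Ioo, mem_Icc, mem_Ioc]
    constructor
    · rintro (⟨a, b⟩ | ⟨a, b⟩)
      · exact ⟨a, by linarith [hh.2]⟩
      · exact ⟨by linarith [hh.1], b⟩
    · rintro ⟨a, b⟩
      by_cases hc : y < hdel
      · exact Or.inl ⟨a, hc⟩
      · exact Or.inr ⟨not_lt.1 hc, b⟩
  rw [hseteq] at hunion
  rw [intervalIntegrable_iff_integrableOn_Ioc_of_le h2π.le]
  exact hunion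

lemma lipschitz_of_hasDerivWithinAt_le {f f' : ℝ → ℝ} {T D t s : ℝ}
    (hf : ∀ r ∈ Icc (0:ℝ) T, HasDerivWithinAt f (f' r) (Icc 0 T) r)
    (hb : ∀ r ∈ Icc (0:ℝ) T, |f' r| ≤ D)
    (ht : t ∈ Icc (0:ℝ) T) (hs : s ∈ Icc (0:ℝ) T) :
    |f t - f s| ≤ D * |t - s| := by
  have := (convex_Icc (0:ℝ) T).norm_image_sub_le_of_norm_hasDerivWithin_le hf
    (fun r hr => by rw [Real.norm_eq_abs]; exact hb r hr) hs ht
  simpa [Real.norm_eq_abs] using this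

lemma abs_uper_sub_le {w : ℝ → ℝ → ℝ} {D t s hdel x : ℝ} (hh : hdel ∈ Ioo 0 (2*π))
    (hx : x ∈ Icc (0:ℝ) (2*π))
    (hLip : ∀ y ∈ Icc (0:ℝ) (2*π), |w y t - w y s| ≤ D * |t - s|) :
    |uper w (x - hdel) t - uper w (x - hdel) s| ≤ D * |t - s| := by
  unfold uper
  split_ifs with hc
  · exact hLip _ ⟨by linarith [hx.1, hh.2], by linarith [hx.2, hh.1]⟩
  · exact hLip _ ⟨by linarith [not_lt.1 hc], by linarith [hx.2, hh.1]⟩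

lemma abs_meanFitness_sub_le {k : ℝ → ℝ} {w : ℝ → ℝ → ℝ} {T ε B D t s hdel : ℝ}
    (hh : hdel ∈ Ioo 0 (2*π)) (hε : 0 ≤ ε) (hB : 0 ≤ B) (hD : 0 ≤ D)
    (ht : t ∈ Icc (0:ℝ) T) (hs : s ∈ Icc (0:ℝ) T)
    (hkc : ContinuousOn k (Icc 0 (2*π)))
    (hwc : ContinuousOn (fun p : ℝ × ℝ => w p.1 p.2) (Icc 0 (2*π) ×ˢ Icc 0 T))
    (hk : ∀ y ∈ Icc (0:ℝ) (2*π), |k y| ≤ ε)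
    (hwt : ∀ y ∈ Icc (0:ℝ) (2*π), |w y t| ≤ B)
    (hws : ∀ y ∈ Icc (0:ℝ) (2*π), |w y s| ≤ B)
    (hLip : ∀ y ∈ Icc (0:ℝ) (2*π), |w y t - w y s| ≤ D * |t - s|) :
    |meanFitness k hdel w t - meanFitness k hdel w s| ≤ ε*(2*B*D*|t-s|)*(2*π) := by
  have h2π : (0:ℝ) < 2*π := by positivity
  unfold meanFitness
  rw [← intervalIntegral.integral_sub (integrable_mf_integrand hh ht hkc hwc)
    (integrable_mf_integrand hh hs hkc hwc)]
  have := intervalIntegral.norm_integral_le_of_norm_le_const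
    (a := 0) (b := 2*π) (C := ε*(2*B*D*|t-s|))
    (f := fun ξ => k ξ * w ξ t * uper w (ξ - hdel) t - k ξ * w ξ s * uper w (ξ - hdel) s) ?_
  · rw [Real.norm_eq_abs, sub_zero, abs_of_pos h2π] at this
    exact this
  · intro ξ hξ
    rw [uIoc_of_le h2π.le] at hξ
    have hξI : ξ ∈ Icc (0:ℝ) (2*π) := ⟨hξ.1.le, hξ.2⟩
    rw [Real.norm_eq_abs]
    show |k ξ * w ξ t * uper w (ξ - hdel) t - k ξ * w ξ s * uper w (ξ - hdel) s| ≤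
      ε * (2*B*D*|t-s|)
    have h1 := hk ξ hξI
    have h2 := hwt ξ hξI
    have h3 := hws ξ hξI
    have h4 := abs_uper_le hh hξI hwt
    have h5 := abs_uper_le hh hξI hws
    have h6 := hLip ξ hξI
    have h7 := abs_uper_sub_le hh hξI hLip
    have key : k ξ * w ξ t * uper w (ξ - hdel) t - k ξ * w ξ s * uper w (ξ - hdel) s =
        k ξ * ((w ξ t - w ξ s) * uper w (ξ - hdel) t +
          w ξ s * (uper w (ξ - hdel) t - uper w (ξ - hdel) s)) := by ring
    rw [key, abs_mul]
    have hb1 : |(w ξ t - w ξ s) * uper w (ξ - hdel) t| ≤ (D*|t-s|) * B := by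
      rw [abs_mul]
      exact mul_le_mul h6 h4 (abs_nonneg _) (by positivity)
    have hb2 : |w ξ s * (uper w (ξ - hdel) t - uper w (ξ - hdel) s)| ≤ B * (D*|t-s|) := by
      rw [abs_mul]
      exact mul_le_mul h3 h7 (abs_nonneg _) hB
    have hb3 : |(w ξ t - w ξ s) * uper w (ξ - hdel) t +
        w ξ s * (uper w (ξ - hdel) t - uper w (ξ - hdel) s)| ≤ 2*B*D*|t-s| := by
      refine (abs_add_le _ _).trans ?_
      nlinarith
    calc |k ξ| * |(w ξ t - w ξ s) * uper w (ξ - hdel) t +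
        w ξ s * (uper w (ξ - hdel) t - uper w (ξ - hdel) s)|
        ≤ ε * (2*B*D*|t-s|) := mul_le_mul h1 hb3 (abs_nonneg _) hε

lemma abs_Fop_sub_le {k : ℝ → ℝ} {w : ℝ → ℝ → ℝ} {T ε B D t s hdel x : ℝ}
    (hh : hdel ∈ Ioo 0 (2*π)) (hε : 0 ≤ ε) (hB : 0 ≤ B) (hD : 0 ≤ D)
    (hx : x ∈ Icc (0:ℝ) (2*π))
    (ht : t ∈ Icc (0:ℝ) T) (hs : s ∈ Icc (0:ℝ) T)
    (hkc : ContinuousOn k (Icc 0 (2*π)))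
    (hwc : ContinuousOn (fun p : ℝ × ℝ => w p.1 p.2) (Icc 0 (2*π) ×ˢ Icc 0 T))
    (hk : ∀ y ∈ Icc (0:ℝ) (2*π), |k y| ≤ ε)
    (hwt : ∀ y ∈ Icc (0:ℝ) (2*π), |w y t| ≤ B)
    (hws : ∀ y ∈ Icc (0:ℝ) (2*π), |w y s| ≤ B)
    (hLip : ∀ y ∈ Icc (0:ℝ) (2*π), |w y t - w y s| ≤ D * |t - s|) :
    |Fop k hdel w x t - Fop k hdel w x s| ≤ ε*D*(2*B + 6*π*B^2)*|t-s| := by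
  unfold Fop
  set At := k x * uper w (x - hdel) t - meanFitness k hdel w t with hAt
  set As := k x * uper w (x - hdel) s - meanFitness k hdel w s with hAs
  have h1 := hk x hx
  have h2 := hwt x hx
  have h3 := hws x hx
  have h4 := abs_uper_le hh hx hwt
  have h5 := abs_uper_le hh hx hws
  have h6 := hLip x hx
  have h7 := abs_uper_sub_le hh hx hLip
  have hmf_t := abs_meanFitness_le hh hε hB hk hwt
  have hmf_sub := abs_meanFitness_sub_le hh hε hB hD ht hs hkc hwc hk hwt hws hLip
  have hAtb : |At| ≤ ε*B + ε*B*B*(2*π) := by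
    rw [hAt]
    refine (abs_sub _ _).trans ?_
    rw [abs_mul]
    have : |k x| * |uper w (x - hdel) t| ≤ ε * B := mul_le_mul h1 h4 (abs_nonneg _) hε
    linarith
  have hAsub : |At - As| ≤ ε*(D*|t-s|) + ε*(2*B*D*|t-s|)*(2*π) := by
    have key : At - As = k x * (uper w (x - hdel) t - uper w (x - hdel) s) -
        (meanFitness k hdel w t - meanFitness k hdel w s) := by
      rw [hAt, hAs]; ring
    rw [key]
    refine (abs_sub _ _).trans ?_
    rw [abs_mul]
    have : |k x| * |uper w (x - hdel) t - uper w (x - hdel) s| ≤ ε * (D*|t-s|) :=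
      mul_le_mul h1 h7 (abs_nonneg _) hε
    linarith
  have key2 : w x t * At - w x s * As = (w x t - w x s) * At + w x s * (At - As) := by
    ring
  rw [key2]
  refine (abs_add_le _ _).trans ?_
  rw [abs_mul, abs_mul]
  have hb1 : |w x t - w x s| * |At| ≤ (D*|t-s|) * (ε*B + ε*B*B*(2*π)) :=
    mul_le_mul h6 hAtb (abs_nonneg _) (by positivity)
  have hb2 : |w x s| * |At - As| ≤ B * (ε*(D*|t-s|) + ε*(2*B*D*|t-s|)*(2*π)) :=
    mul_le_mul h3 hAsub (abs_nonneg _) hB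
  have habs : 0 ≤ |t - s| := abs_nonneg _
  nlinarith [Real.pi_pos, mul_nonneg (mul_nonneg hε hD) habs]

open Filter Topology in
lemma tendsto_right_diffquot {f : ℝ → ℝ} {d T t : ℝ} (ht0 : 0 ≤ t) (htT : t < T)
    (hf : HasDerivWithinAt f d (Icc 0 T) t) :
    Tendsto (fun δ => (f (t + δ) - f t)/δ) (𝓝[Ioo 0 (T - t)] 0) (𝓝 d) := by
  have hs := hasDerivWithinAt_iff_tendsto_slope.1 hf
  have hmap : Tendsto (fun δ : ℝ => t + δ) (𝓝[Ioo 0 (T-t)] 0) (𝓝[Icc 0 T \ {t}] t) := by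
    apply tendsto_nhdsWithin_of_tendsto_nhds_of_eventually_within
    · have h1 : Tendsto (fun δ : ℝ => t + δ) (𝓝 0) (𝓝 (t + 0)) :=
        (continuous_const.add continuous_id).tendsto 0
      rw [add_zero] at h1
      exact h1.mono_left nhdsWithin_le_nhds
    · filter_upwards [self_mem_nhdsWithin] with δ hδ
      refine ⟨⟨by linarith [hδ.1], by linarith [hδ.2]⟩, ?_⟩
      simp only [mem_singleton_iff]
      intro hc
      have : δ = 0 := by linarith [hδ.1, congrArg (fun z => z - t) hc]
      linarith [hδ.1]
  have hcomp := hs.comp hmap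
  have heq : ((slope f t) ∘ (fun δ : ℝ => t + δ)) = fun δ => (f (t + δ) - f t)/δ := by
    funext δ
    simp [Function.comp, slope_def_field]
  rwa [heq] at hcomp

open Filter Topology in
lemma ut_bound {T αc : ℝ} (hT : 0 < T) (hα : 0 < αc)
    {w wx wxx wt g : ℝ → ℝ → ℝ} {N L : ℝ} (hN : 0 ≤ N) (hL : 0 ≤ L)
    (hC : IsC21 T w wx wxx wt)
    (hper : ∀ t ∈ Icc (0:ℝ) T, w 0 t = w (2*π) t)
    (hperx : ∀ t ∈ Icc (0:ℝ) T, wx 0 t = wx (2*π) t)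
    (hpde : ∀ x ∈ Icc (0:ℝ) (2*π), ∀ t ∈ Icc (0:ℝ) T, wt x t - αc * wxx x t = g x t)
    (hgLip : ∀ x ∈ Icc (0:ℝ) (2*π), ∀ t ∈ Icc (0:ℝ) T, ∀ s ∈ Icc (0:ℝ) T,
      |g x t - g x s| ≤ L * |t - s|)
    (hN0 : ∀ x ∈ Icc (0:ℝ) (2*π), |wt x 0| ≤ N) :
    ∀ x ∈ Icc (0:ℝ) (2*π), ∀ t ∈ Icc (0:ℝ) T, |wt x t| ≤ N + T * L := by
  have h2π : (0:ℝ) < 2*π := by positivity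
  -- Step 1 : small-time bound on wt
  have step1 : ∀ ρ > (0:ℝ), ∃ δ₀ > (0:ℝ), ∀ x ∈ Icc (0:ℝ) (2*π), ∀ s ∈ Icc (0:ℝ) T,
      s ≤ δ₀ → |wt x s| ≤ N + ρ := by
    intro ρ hρ
    have hKc : IsCompact (Icc (0:ℝ) (2*π) ×ˢ Icc (0:ℝ) T) := isCompact_Icc.prod isCompact_Icc
    have huc := hKc.uniformContinuousOn_of_continuous hC.cont_ut
    rw [Metric.uniformContinuousOn_iff] at huc
    obtain ⟨δ₀, hδ₀, hucd⟩ := huc ρ hρ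
    refine ⟨δ₀/2, by positivity, ?_⟩
    intro x hx s hs hsδ
    have hd : dist ((x, s) : ℝ × ℝ) (x, 0) < δ₀ := by
      rw [Prod.dist_eq]
      simp only [dist_self, Real.dist_eq, sub_zero]
      rw [max_lt_iff]
      constructor
      · linarith
      · rw [abs_of_nonneg hs.1]; linarith
    have := hucd (x, s) ⟨hx, hs⟩ (x, 0) ⟨hx, ⟨le_rfl, hT.le⟩⟩ hd
    rw [Real.dist_eq] at this
    have h0 := hN0 x hx
    have := abs_sub_abs_le_abs_sub (wt x s) (wt x 0)
    linarith
  -- Step 2 : difference quotient bound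
  have step2 : ∀ ρ > (0:ℝ), ∀ δ₀ > (0:ℝ),
      (∀ x ∈ Icc (0:ℝ) (2*π), ∀ s ∈ Icc (0:ℝ) T, s ≤ δ₀ → |wt x s| ≤ N + ρ) →
      ∀ δ, 0 < δ → δ ≤ δ₀ → δ < T →
      ∀ x ∈ Icc (0:ℝ) (2*π), ∀ r ∈ Icc (0:ℝ) (T - δ),
        |(w x (r + δ) - w x r)/δ| ≤ (N + ρ) + T * L := by
    intro ρ hρ δ₀ hδ₀ hsmall δ hδ hδδ₀ hδT x hx r hr
    have hTδ : (0:ℝ) < T - δ := by linarith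
    have hsub : Icc (0:ℝ) (T - δ) ⊆ Icc (0:ℝ) T := Icc_subset_Icc le_rfl (by linarith)
    have hmem : ∀ s ∈ Icc (0:ℝ) (T - δ), s + δ ∈ Icc (0:ℝ) T := by
      intro s hs; exact ⟨by linarith [hs.1], by linarith [hs.2]⟩
    -- IsC21 structure for the difference quotient
    set v : ℝ → ℝ → ℝ := fun x r => (w x (r + δ) - w x r)/δ with hv
    set vx : ℝ → ℝ → ℝ := fun x r => (wx x (r + δ) - wx x r)/δ with hvx
    set vxx : ℝ → ℝ → ℝ := fun x r => (wxx x (r + δ) - wxx x r)/δ with hvxx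
    set vt : ℝ → ℝ → ℝ := fun x r => (wt x (r + δ) - wt x r)/δ with hvt
    have hshiftc : ContinuousOn (fun p : ℝ × ℝ => (p.1, p.2 + δ))
        (Icc (0:ℝ) (2*π) ×ˢ Icc (0:ℝ) (T - δ)) :=
      (continuous_fst.prodMk (continuous_snd.add continuous_const)).continuousOn
    have hmapsTo : MapsTo (fun p : ℝ × ℝ => (p.1, p.2 + δ))
        (Icc (0:ℝ) (2*π) ×ˢ Icc (0:ℝ) (T - δ)) (Icc (0:ℝ) (2*π) ×ˢ Icc (0:ℝ) T) :=
      fun p hp => ⟨hp.1, hmem p.2 hp.2⟩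
    have hprodsub : (Icc (0:ℝ) (2*π) ×ˢ Icc (0:ℝ) (T - δ)) ⊆
        (Icc (0:ℝ) (2*π) ×ˢ Icc (0:ℝ) T) := prod_mono subset_rfl hsub
    have contdq : ∀ {F : ℝ → ℝ → ℝ},
        ContinuousOn (fun p : ℝ × ℝ => F p.1 p.2) (Icc (0:ℝ) (2*π) ×ˢ Icc (0:ℝ) T) →
        ContinuousOn (fun p : ℝ × ℝ => (F p.1 (p.2 + δ) - F p.1 p.2)/δ)
          (Icc (0:ℝ) (2*π) ×ˢ Icc (0:ℝ) (T - δ)) := by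
      intro F hF
      exact ((hF.comp hshiftc hmapsTo).sub (hF.mono hprodsub)).div_const δ
    have hCv : IsC21 (T - δ) v vx vxx vt := by
      refine ⟨contdq hC.cont_u, contdq hC.cont_ux, contdq hC.cont_uxx, contdq hC.cont_ut,
        ?_, ?_, ?_⟩
      · intro s hs y hy
        exact ((hC.hasDeriv_x (s + δ) (hmem s hs) y hy).sub
          (hC.hasDeriv_x s (hsub hs) y hy)).div_const δ
      · intro s hs y hy
        exact ((hC.hasDeriv_xx (s + δ) (hmem s hs) y hy).sub
          (hC.hasDeriv_xx s (hsub hs) y hy)).div_const δ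
      · intro s hs y hy
        have hshift : HasDerivWithinAt (fun z : ℝ => z + δ) 1 (Icc 0 (T - δ)) s :=
          (hasDerivWithinAt_id s _).add_const δ
        have h1 : HasDerivWithinAt (fun z => w y (z + δ)) (wt y (s + δ))
            (Icc 0 (T - δ)) s := by
          have := (hC.hasDeriv_t (s + δ) (hmem s hs) y hy).comp s hshift
            (fun z hz => hmem z hz)
          simpa [Function.comp_def] using this
        have h2 : HasDerivWithinAt (fun z => w y z) (wt y s) (Icc 0 (T - δ)) s :=
          (hC.hasDeriv_t s (hsub hs) y hy).mono hsub
        exact (h1.sub h2).div_const δ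
    -- max principle for v
    have hvbound := maxPrinciple_abs (g := fun y s => (g y (s + δ) - g y s)/δ)
      hTδ hα hL hCv
      (fun s hs => by
        show (w 0 (s + δ) - w 0 s)/δ = (w (2*π) (s + δ) - w (2*π) s)/δ
        rw [hper (s + δ) (hmem s hs), hper s (hsub hs)])
      (fun s hs => by
        show (wx 0 (s + δ) - wx 0 s)/δ = (wx (2*π) (s + δ) - wx (2*π) s)/δ
        rw [hperx (s + δ) (hmem s hs), hperx s (hsub hs)])
      (fun y hy s hs => by
        have e1 := hpde y hy (s + δ) (hmem s hs)
        have e2 := hpde y hy s (hsub hs)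
        show (wt y (s + δ) - wt y s)/δ - αc * ((wxx y (s + δ) - wxx y s)/δ) =
          (g y (s + δ) - g y s)/δ
        field_simp
        linarith)
      (fun y hy s hs => by
        show |(g y (s + δ) - g y s)/δ| ≤ L
        rw [abs_div, abs_of_pos hδ, div_le_iff₀ hδ]
        have := hgLip y hy (s + δ) (hmem s hs) s (hsub hs)
        have harg : |s + δ - s| = δ := by
          rw [show s + δ - s = δ by ring, abs_of_pos hδ]
        rw [harg] at this
        linarith)
      (fun y hy => by
        show |(w y (0 + δ) - w y 0)/δ| ≤ N + ρ
        rw [abs_div, abs_of_pos hδ, div_le_iff₀ hδ]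
        have hlip := lipschitz_of_hasDerivWithinAt_le (T := δ) (D := N + ρ)
          (f := fun s => w y s) (f' := fun s => wt y s)
          (fun r hr => (hC.hasDeriv_t r ⟨hr.1, by linarith [hr.2]⟩ y hy).mono
            (Icc_subset_Icc le_rfl (by linarith)))
          (fun r hr => hsmall y hy r ⟨hr.1, by linarith [hr.2]⟩ (by linarith [hr.2]))
          (right_mem_Icc.2 hδ.le) (left_mem_Icc.2 hδ.le)
        rw [zero_add]
        have harg : |δ - 0| = δ := by rw [sub_zero, abs_of_pos hδ]
        rw [harg] at hlip
        exact hlip) x hx r hr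
    calc |(w x (r + δ) - w x r)/δ| ≤ (N + ρ) + (T - δ) * L := hvbound
      _ ≤ (N + ρ) + T * L := by nlinarith
  -- Step 3 : pass to the limit δ → 0⁺, for t < T
  have step3 : ∀ x ∈ Icc (0:ℝ) (2*π), ∀ t ∈ Ico (0:ℝ) T, |wt x t| ≤ N + T * L := by
    intro x hx t ht
    refine le_of_forall_pos_le_add ?_
    intro ρ hρ
    obtain ⟨δ₀, hδ₀, hsmall⟩ := step1 ρ hρ
    have htd := tendsto_right_diffquot ht.1 ht.2 (hC.hasDeriv_t t ⟨ht.1, ht.2.le⟩ x hx)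
    have hne : (𝓝[Ioo (0:ℝ) (T - t)] 0).NeBot := by
      refine mem_closure_iff_nhdsWithin_neBot.1 ?_
      rw [closure_Ioo (by linarith [ht.2] : (0:ℝ) ≠ T - t)]
      exact ⟨le_rfl, by linarith [ht.2]⟩
    have hev : ∀ᶠ δ in 𝓝[Ioo (0:ℝ) (T - t)] 0,
        |(w x (t + δ) - w x t)/δ| ≤ (N + ρ) + T * L := by
      have hlt : ∀ᶠ δ in 𝓝[Ioo (0:ℝ) (T - t)] 0, δ < min δ₀ T := by
        refine Filter.Eventually.filter_mono nhdsWithin_le_nhds ?_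
        exact gt_mem_nhds (lt_min hδ₀ hT)
      filter_upwards [self_mem_nhdsWithin, hlt] with δ hδmem hδlt
      have h1 : 0 < δ := hδmem.1
      have h2 : δ ≤ δ₀ := le_of_lt (lt_of_lt_of_le hδlt (min_le_left _ _))
      have h3 : δ < T := lt_of_lt_of_le hδlt (min_le_right _ _)
      have hrmem : t ∈ Icc (0:ℝ) (T - δ) := ⟨ht.1, by linarith [hδmem.2]⟩
      exact step2 ρ hρ δ₀ hδ₀ hsmall δ h1 h2 h3 x hx t hrmem
    have habs := le_of_tendsto htd.abs hev
    linarith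
  -- Step 4 : extend to t = T by continuity
  intro x hx t ht
  rcases eq_or_lt_of_le ht.2 with hteq | htlt
  · subst hteq
    have hcont : ContinuousWithinAt (fun s => wt x s) (Icc 0 t) t := by
      have hmap : ContinuousOn (fun s : ℝ => (x, s)) (Icc (0:ℝ) t) :=
        (continuous_const.prodMk continuous_id).continuousOn
      exact (hC.cont_ut.comp hmap (fun s hs => ⟨hx, hs⟩)) t ht
    have hne : (𝓝[Ico (0:ℝ) t] t).NeBot := by
      refine mem_closure_iff_nhdsWithin_neBot.1 ?_
      rw [closure_Ico (show (0:ℝ) ≠ t by intro hc; rw [← hc] at hT; exact lt_irrefl 0 hT)]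
      exact ⟨hT.le, le_rfl⟩
    have htt : Tendsto (fun s => wt x s) (𝓝[Ico (0:ℝ) t] t) (𝓝 (wt x t)) :=
      hcont.tendsto.mono_left (nhdsWithin_mono _ Ico_subset_Icc_self)
    refine le_of_tendsto htt.abs ?_
    filter_upwards [self_mem_nhdsWithin] with s hs
    exact step3 x hx s hs
  · exact step3 x hx t ⟨ht.1, htlt⟩

lemma hasDerivWithinAt_unique_Icc {a b x : ℝ} (hab : a < b) (hx : x ∈ Icc a b)
    {f : ℝ → ℝ} {d1 d2 : ℝ}
    (h1 : HasDerivWithinAt f d1 (Icc a b) x) (h2 : HasDerivWithinAt f d2 (Icc a b) x) :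
    d1 = d2 := by
  have hu := (uniqueDiffOn_Icc hab) x hx
  rw [← h1.derivWithin hu, ← h2.derivWithin hu]

/-- Lemma 2 of the paper: uniform boundedness of the `C^{2,1}` norms
of the Picard iterates for sufficiently small `k̄`. -/
theorem stmt2 (h α T : ℝ) (hh : h ∈ Ioo 0 (2 * π)) (hα : 0 < α) (hT : 0 < T)
    (φ : ℝ → ℝ)
    (hφC2 : ContDiffOn ℝ 2 φ (Icc (-h) (2 * π)))
    (hφnonneg : ∀ x ∈ Icc (-h) (2 * π), 0 ≤ φ x)
    (hφint : ∫ x in (0:ℝ)..(2 * π), φ x = 1)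
    (hφper : ∀ x ∈ Icc (-h) 0, φ x = φ (x + 2 * π)) :
    ∃ ε > 0, ∀ k : ℝ → ℝ, ∀ u ux uxx ut : ℕ → ℝ → ℝ → ℝ,
      ContDiffOn ℝ 2 k (Icc 0 (2 * π)) →
      (∀ x ∈ Icc (0:ℝ) (2 * π), 0 < k x) →
      k 0 = k (2 * π) →
      derivWithin k (Icc 0 (2 * π)) 0 = derivWithin k (Icc 0 (2 * π)) (2 * π) →
      (∀ x ∈ Icc (0:ℝ) (2 * π),
        |k x| ≤ ε ∧ |derivWithin k (Icc 0 (2 * π)) x| ≤ ε ∧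
          |derivWithin (derivWithin k (Icc 0 (2 * π))) (Icc 0 (2 * π)) x| ≤ ε) →
      (∀ x t : ℝ, u 0 x t = φ x) →
      (∀ m : ℕ, IsC21 T (u m) (ux m) (uxx m) (ut m)) →
      (∀ m : ℕ, ∀ x ∈ Icc (0:ℝ) (2 * π), ∀ t ∈ Icc (0:ℝ) T,
        ut (m + 1) x t - α * uxx (m + 1) x t = Fop k h (u m) x t) →
      (∀ m : ℕ, ∀ x ∈ Icc (0:ℝ) (2 * π), u (m + 1) x 0 = φ x) →
      (∀ m : ℕ, ∀ t ∈ Icc (0:ℝ) T,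
        u (m + 1) 0 t = u (m + 1) (2 * π) t ∧ ux (m + 1) 0 t = ux (m + 1) (2 * π) t) →
      ∃ C : ℝ, ∀ m : ℕ, ∀ x ∈ Icc (0:ℝ) (2 * π), ∀ t ∈ Icc (0:ℝ) T,
        |u m x t| + |ux m x t| + |uxx m x t| + |ut m x t| ≤ C := by
  have h2π : (0:ℝ) < 2*π := by positivity
  have hsub0 : Icc (0:ℝ) (2*π) ⊆ Icc (-h) (2*π) :=
    Icc_subset_Icc (by linarith [hh.1]) le_rfl
  have hUD : UniqueDiffOn ℝ (Icc (0:ℝ) (2*π)) := uniqueDiffOn_Icc h2π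
  have hφC2' : ContDiffOn ℝ 2 φ (Icc 0 (2*π)) := hφC2.mono hsub0
  set φ₁ : ℝ → ℝ := derivWithin φ (Icc 0 (2*π)) with hφ₁def
  set φ₂ : ℝ → ℝ := derivWithin φ₁ (Icc 0 (2*π)) with hφ₂def
  have hφ1C1 : ContDiffOn ℝ 1 φ₁ (Icc 0 (2*π)) := hφC2'.derivWithin hUD (by norm_num)
  have hφcont : ContinuousOn φ (Icc 0 (2*π)) := hφC2'.continuousOn
  have hφ1cont : ContinuousOn φ₁ (Icc 0 (2*π)) := hφ1C1.continuousOn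
  have hφ2cont : ContinuousOn φ₂ (Icc 0 (2*π)) := hφ1C1.continuousOn_derivWithin hUD le_rfl
  have hφdiff : DifferentiableOn ℝ φ (Icc 0 (2*π)) := hφC2'.differentiableOn (by norm_num)
  have hφ1diff : DifferentiableOn ℝ φ₁ (Icc 0 (2*π)) := hφ1C1.differentiableOn one_ne_zero
  have hφder : ∀ x ∈ Icc (0:ℝ) (2*π), HasDerivWithinAt φ (φ₁ x) (Icc 0 (2*π)) x :=
    fun x hx => (hφdiff x hx).hasDerivWithinAt
  have hφ1der : ∀ x ∈ Icc (0:ℝ) (2*π), HasDerivWithinAt φ₁ (φ₂ x) (Icc 0 (2*π)) x :=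
    fun x hx => (hφ1diff x hx).hasDerivWithinAt
  have h0mem : (0:ℝ) ∈ Icc (0:ℝ) (2*π) := left_mem_Icc.2 h2π.le
  obtain ⟨Bφ, hBφ⟩ := isCompact_Icc.exists_bound_of_continuousOn hφcont
  obtain ⟨C1, hC1⟩ := isCompact_Icc.exists_bound_of_continuousOn hφ1cont
  obtain ⟨C2, hC2⟩ := isCompact_Icc.exists_bound_of_continuousOn hφ2cont
  simp only [Real.norm_eq_abs] at hBφ hC1 hC2
  have hBφ0 : 0 ≤ Bφ := le_trans (abs_nonneg _) (hBφ 0 h0mem)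
  have hC10 : 0 ≤ C1 := le_trans (abs_nonneg _) (hC1 0 h0mem)
  have hC20 : 0 ≤ C2 := le_trans (abs_nonneg _) (hC2 0 h0mem)
  obtain ⟨B, hBdef⟩ : ∃ z : ℝ, z = Bφ + 1 := ⟨_, rfl⟩
  have hB0 : (1:ℝ) ≤ B := by rw [hBdef]; linarith
  have hB0' : (0:ℝ) ≤ B := by linarith
  have hBpos : (0:ℝ) < B := by linarith
  obtain ⟨Q, hQdef⟩ : ∃ z : ℝ, z = B^2 + 2*π*B^3 := ⟨_, rfl⟩
  obtain ⟨R, hRdef⟩ : ∃ z : ℝ, z = 2*B + 6*π*B^2 := ⟨_, rfl⟩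
  have hQpos : 0 < Q := by rw [hQdef]; positivity
  have hRpos : 0 < R := by rw [hRdef]; positivity
  have haC2 : 0 ≤ α*C2 := mul_nonneg hα.le hC20
  obtain ⟨Dmax, hDdef⟩ : ∃ z : ℝ, z = 2*(α*C2 + Q) := ⟨_, rfl⟩
  have hDmax0 : 0 ≤ Dmax := by rw [hDdef]; linarith
  obtain ⟨ε, hεdef⟩ : ∃ z : ℝ, z = min 1 (min (1/(T*Q)) (1/(2*T*R))) := ⟨_, rfl⟩
  have hTQ : 0 < T*Q := mul_pos hT hQpos
  have hTR : 0 < 2*T*R := by positivity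
  have hεpos : 0 < ε := by
    rw [hεdef]
    exact lt_min one_pos (lt_min (one_div_pos.2 hTQ) (one_div_pos.2 hTR))
  have hε1 : ε ≤ 1 := by rw [hεdef]; exact min_le_left _ _
  have hε2 : ε * (T*Q) ≤ 1 := by
    have h2 : ε ≤ 1/(T*Q) := by
      rw [hεdef]; exact le_trans (min_le_right _ _) (min_le_left _ _)
    rw [le_div_iff₀ hTQ] at h2
    linarith
  have hε3 : ε * (2*T*R) ≤ 1 := by
    have h3 : ε ≤ 1/(2*T*R) := by
      rw [hεdef]; exact le_trans (min_le_right _ _) (min_le_right _ _)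
    rw [le_div_iff₀ hTR] at h3
    linarith
  have hεQ0 : 0 ≤ ε*Q := mul_nonneg hεpos.le hQpos.le
  refine ⟨ε, hεpos, ?_⟩
  intro k u ux uxx ut hkC2 hkpos hkper hkper' hkbound hu0 hC21 hpde hinit hbc
  have hkcont : ContinuousOn k (Icc 0 (2*π)) := hkC2.continuousOn
  have hkabs : ∀ x ∈ Icc (0:ℝ) (2*π), |k x| ≤ ε := fun x hx => (hkbound x hx).1
  -- claim 1 : uniform bound on u
  have claim_u : ∀ m : ℕ, ∀ x ∈ Icc (0:ℝ) (2*π), ∀ t ∈ Icc (0:ℝ) T, |u m x t| ≤ B := by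
    intro m
    induction m with
    | zero =>
      intro x hx t _
      rw [hu0 x t]
      exact le_trans (hBφ x hx) (by linarith)
    | succ m IH =>
      intro x hx t ht
      have hFb : ∀ y ∈ Icc (0:ℝ) (2*π), ∀ s ∈ Icc (0:ℝ) T,
          |Fop k h (u m) y s| ≤ ε * Q := by
        intro y hy s hs
        rw [hQdef]
        exact abs_Fop_le hh hεpos.le hB0' hy hkabs (fun z hz => IH z hz s hs)
      have hmp := maxPrinciple_abs (g := Fop k h (u m)) hT hα hεQ0
        (hC21 (m+1))
        (fun s hs => (hbc m s hs).1) (fun s hs => (hbc m s hs).2)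
        (hpde m) hFb
        (fun y hy => by rw [hinit m y hy]; exact le_trans (hBφ y hy) le_rfl)
        x hx t ht
      have : Bφ + T * (ε * Q) ≤ B := by
        have he : T * (ε * Q) ≤ 1 := by
          rw [show T * (ε * Q) = ε * (T * Q) by ring]; exact hε2
        rw [hBdef]
        linarith
      linarith
  -- identification of the zeroth iterate's derivatives
  have hu0fun : ∀ t : ℝ, (fun y => u 0 y t) = φ := fun t => funext (fun y => hu0 y t)
  have claim_ux0 : ∀ x ∈ Icc (0:ℝ) (2*π), ∀ t ∈ Icc (0:ℝ) T, ux 0 x t = φ₁ x := by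
    intro x hx t ht
    have h1 := (hC21 0).hasDeriv_x t ht x hx
    rw [hu0fun t] at h1
    exact hasDerivWithinAt_unique_Icc h2π hx h1 (hφder x hx)
  have claim_uxx0 : ∀ x ∈ Icc (0:ℝ) (2*π), ∀ t ∈ Icc (0:ℝ) T, uxx 0 x t = φ₂ x := by
    intro x hx t ht
    have h1 := (hC21 0).hasDeriv_xx t ht x hx
    have h2 : HasDerivWithinAt φ₁ (uxx 0 x t) (Icc 0 (2*π)) x := by
      refine h1.congr (fun y hy => (claim_ux0 y hy t ht).symm) ((claim_ux0 x hx t ht).symm)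
    exact hasDerivWithinAt_unique_Icc h2π hx h2 (hφ1der x hx)
  have claim_ut0 : ∀ x ∈ Icc (0:ℝ) (2*π), ∀ t ∈ Icc (0:ℝ) T, ut 0 x t = 0 := by
    intro x hx t ht
    have h1 := (hC21 0).hasDeriv_t t ht x hx
    have h2 : HasDerivWithinAt (fun _ : ℝ => φ x) (0:ℝ) (Icc 0 T) t :=
      hasDerivWithinAt_const t _ (φ x)
    have heq : (fun s => u 0 x s) = (fun _ : ℝ => φ x) := funext (fun s => hu0 x s)
    rw [heq] at h1
    exact hasDerivWithinAt_unique_Icc hT ht h1 h2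
  -- the second spatial derivative at time 0 of the iterates
  have claim_uxx_init : ∀ m : ℕ, ∀ x ∈ Icc (0:ℝ) (2*π), uxx (m+1) x 0 = φ₂ x := by
    intro m x hx
    have ht0 : (0:ℝ) ∈ Icc (0:ℝ) T := left_mem_Icc.2 hT.le
    have hux_init : ∀ y ∈ Icc (0:ℝ) (2*π), ux (m+1) y 0 = φ₁ y := by
      intro y hy
      have h1 := (hC21 (m+1)).hasDeriv_x 0 ht0 y hy
      have h2 : HasDerivWithinAt φ (ux (m+1) y 0) (Icc 0 (2*π)) y :=
        h1.congr (fun z hz => (hinit m z hz).symm) ((hinit m y hy).symm)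
      exact hasDerivWithinAt_unique_Icc h2π hy h2 (hφder y hy)
    have h1 := (hC21 (m+1)).hasDeriv_xx 0 ht0 x hx
    have h2 : HasDerivWithinAt φ₁ (uxx (m+1) x 0) (Icc 0 (2*π)) x :=
      h1.congr (fun z hz => (hux_init z hz).symm) ((hux_init x hx).symm)
    exact hasDerivWithinAt_unique_Icc h2π hx h2 (hφ1der x hx)
  -- claim 2 : uniform bound on ut
  have claim_ut : ∀ m : ℕ, ∀ x ∈ Icc (0:ℝ) (2*π), ∀ t ∈ Icc (0:ℝ) T,
      |ut m x t| ≤ Dmax := by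
    intro m
    induction m with
    | zero =>
      intro x hx t ht
      rw [claim_ut0 x hx t ht, abs_zero]
      exact hDmax0
    | succ m IH =>
      have hLip_u : ∀ t ∈ Icc (0:ℝ) T, ∀ s ∈ Icc (0:ℝ) T, ∀ y ∈ Icc (0:ℝ) (2*π),
          |u m y t - u m y s| ≤ Dmax * |t - s| := by
        intro t ht s hs y hy
        exact lipschitz_of_hasDerivWithinAt_le
          (f := fun r => u m y r) (f' := fun r => ut m y r)
          (fun r hr => (hC21 m).hasDeriv_t r hr y hy)
          (fun r hr => IH y hy r hr) ht hs
      have hgLip : ∀ y ∈ Icc (0:ℝ) (2*π), ∀ t ∈ Icc (0:ℝ) T, ∀ s ∈ Icc (0:ℝ) T,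
          |Fop k h (u m) y t - Fop k h (u m) y s| ≤ (ε*R*Dmax) * |t - s| := by
        intro y hy t ht s hs
        have := abs_Fop_sub_le (T := T) (D := Dmax) hh hεpos.le hB0' hDmax0 hy ht hs
          hkcont (hC21 m).cont_u hkabs
          (fun z hz => claim_u m z hz t ht) (fun z hz => claim_u m z hz s hs)
          (fun z hz => hLip_u t ht s hs z hz)
        calc |Fop k h (u m) y t - Fop k h (u m) y s|
            ≤ ε*Dmax*(2*B + 6*π*B^2)*|t-s| := this
          _ = (ε*R*Dmax) * |t - s| := by rw [hRdef]; ring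
      have hN0 : ∀ y ∈ Icc (0:ℝ) (2*π), |ut (m+1) y 0| ≤ α*C2 + ε*Q := by
        intro y hy
        have ht0 : (0:ℝ) ∈ Icc (0:ℝ) T := left_mem_Icc.2 hT.le
        have hpde0 := hpde m y hy 0 ht0
        have hFb := abs_Fop_le hh hεpos.le hB0' hy hkabs
          (fun z hz => claim_u m z hz 0 ht0)
        have huxx0 := claim_uxx_init m y hy
        have : ut (m+1) y 0 = α * φ₂ y + Fop k h (u m) y 0 := by
          rw [← huxx0]; linarith
        rw [this]
        refine (abs_add_le _ _).trans ?_
        rw [abs_mul, abs_of_pos hα]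
        have h1 := mul_le_mul_of_nonneg_left (hC2 y hy) hα.le
        rw [hQdef]
        linarith
      have hub := ut_bound hT hα (N := α*C2 + ε*Q) (L := ε*R*Dmax)
        (by linarith) (mul_nonneg (mul_nonneg hεpos.le hRpos.le) hDmax0) (hC21 (m+1))
        (fun s hs => (hbc m s hs).1) (fun s hs => (hbc m s hs).2)
        (hpde m) hgLip hN0
      intro x hx t ht
      have := hub x hx t ht
      have hT1 : T * (ε*R*Dmax) ≤ Dmax/2 := by
        nlinarith [mul_le_mul_of_nonneg_right hε3 hDmax0]
      have hQ1 : ε*Q ≤ Q := by nlinarith [mul_le_mul_of_nonneg_right hε1 hQpos.le]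
      calc |ut (m+1) x t| ≤ (α*C2 + ε*Q) + T*(ε*R*Dmax) := this
        _ ≤ (α*C2 + Q) + Dmax/2 := by
            have hq : ε*Q ≤ Q := by
              have := mul_le_mul_of_nonneg_right hε1 hQpos.le
              linarith
            linarith
        _ = Dmax := by rw [hDdef]; ring
  -- claim 3 : uniform bound on uxx
  obtain ⟨Cxx, hCxxdef⟩ : ∃ z : ℝ, z = C2 + (Dmax + Q)/α := ⟨_, rfl⟩
  have hdivpos : 0 ≤ (Dmax + Q)/α := div_nonneg (by linarith) hα.le
  have hCxx0 : 0 ≤ Cxx := by rw [hCxxdef]; linarith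
  have claim_uxx : ∀ m : ℕ, ∀ x ∈ Icc (0:ℝ) (2*π), ∀ t ∈ Icc (0:ℝ) T,
      |uxx m x t| ≤ Cxx := by
    intro m
    cases m with
    | zero =>
      intro x hx t ht
      rw [claim_uxx0 x hx t ht, hCxxdef]
      linarith [hC2 x hx]
    | succ m =>
      intro x hx t ht
      have hpde1 := hpde m x hx t ht
      have hFb := abs_Fop_le hh hεpos.le hB0' hx hkabs (fun z hz => claim_u m z hz t ht)
      have hut := claim_ut (m+1) x hx t ht
      have heq : uxx (m+1) x t = (ut (m+1) x t - Fop k h (u m) x t)/α := by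
        rw [eq_div_iff hα.ne']
        linarith
      rw [heq, abs_div, abs_of_pos hα, div_le_iff₀ hα]
      have hFb' : |Fop k h (u m) x t| ≤ Q := by
        have hq0 : (0:ℝ) ≤ B^2+2*π*B^3 := by positivity
        have h1 : ε*(B^2+2*π*B^3) ≤ B^2+2*π*B^3 := by
          have := mul_le_mul_of_nonneg_right hε1 hq0
          linarith
        rw [hQdef]
        linarith
      have habs := abs_sub (ut (m+1) x t) (Fop k h (u m) x t)
      have hC2x : (0:ℝ) ≤ C2 * α := mul_nonneg hC20 hα.le
      rw [hCxxdef]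
      have hda : (Dmax + Q)/α * α = Dmax + Q := by field_simp
      calc |ut (m+1) x t - Fop k h (u m) x t| ≤ Dmax + Q := by linarith
        _ ≤ (C2 + (Dmax + Q)/α) * α := by
            rw [add_mul, hda]
            linarith
  -- claim 4 : uniform bound on ux
  obtain ⟨Cux, hCuxdef⟩ : ∃ z : ℝ, z = C1 + 2*π*Cxx := ⟨_, rfl⟩
  have claim_ux : ∀ m : ℕ, ∀ x ∈ Icc (0:ℝ) (2*π), ∀ t ∈ Icc (0:ℝ) T,
      |ux m x t| ≤ Cux := by
    intro m
    cases m with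
    | zero =>
      intro x hx t ht
      rw [claim_ux0 x hx t ht, hCuxdef]
      have : (0:ℝ) ≤ 2*π*Cxx := mul_nonneg (by positivity) hCxx0
      linarith [hC1 x hx]
    | succ m =>
      intro x hx t ht
      -- find a zero of ux (m+1) (·, t)
      have hcontf : ContinuousOn (fun y => u (m+1) y t) (Icc 0 (2*π)) := fun y hy =>
        ((hC21 (m+1)).hasDeriv_x t ht y hy).differentiableWithinAt.continuousWithinAt
      have hder : ∀ y ∈ Ioo (0:ℝ) (2*π), HasDerivAt (fun z => u (m+1) z t) (ux (m+1) y t) y := by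
        intro y hy
        exact ((hC21 (m+1)).hasDeriv_x t ht y ⟨hy.1.le, hy.2.le⟩).hasDerivAt
          (Icc_mem_nhds hy.1 hy.2)
      obtain ⟨c, hc, hceq⟩ := exists_hasDerivAt_eq_slope (fun z => u (m+1) z t)
        (fun y => ux (m+1) y t) h2π hcontf hder
      have hc0 : ux (m+1) c t = 0 := by
        have h' : ux (m+1) c t = (u (m+1) (2*π) t - u (m+1) 0 t)/(2*π - 0) := hceq
        rw [← (hbc m t ht).1, sub_self, zero_div] at h'
        exact h'
      have hcIcc : c ∈ Icc (0:ℝ) (2*π) := ⟨hc.1.le, hc.2.le⟩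
      have hlip := (convex_Icc (0:ℝ) (2*π)).norm_image_sub_le_of_norm_hasDerivWithin_le
        (f := fun y => ux (m+1) y t) (f' := fun y => uxx (m+1) y t)
        (fun y hy => (hC21 (m+1)).hasDeriv_xx t ht y hy)
        (fun y hy => by rw [Real.norm_eq_abs]; exact claim_uxx (m+1) y hy t ht)
        hcIcc hx
      have hlip2 : |ux (m+1) x t - ux (m+1) c t| ≤ Cxx * |x - c| := by
        simpa [Real.norm_eq_abs] using hlip
      rw [hc0, sub_zero] at hlip2
      have hxc : |x - c| ≤ 2*π := by
        rw [abs_le]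
        constructor
        · linarith [hx.1, hc.2]
        · linarith [hx.2, hc.1]
      have : Cxx * |x - c| ≤ Cxx * (2*π) := mul_le_mul_of_nonneg_left hxc hCxx0
      rw [hCuxdef]
      calc |ux (m+1) x t| ≤ Cxx * (2*π) := by linarith [hlip2]
        _ ≤ C1 + 2*π*Cxx := by linarith
  refine ⟨B + Cux + Cxx + Dmax, ?_⟩
  intro m x hx t ht
  have h1 := claim_u m x hx t ht
  have h2 := claim_ux m x hx t ht
  have h3 := claim_uxx m x hx t ht
  have h4 := claim_ut m x hx t ht
  linarith
end Helpers
end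
end

section
/- Let h ∈ (0, 2π), α > 0, T > 0, let k : [0, 2π] → ℝ be continuous, and let u ∈ C^{2,1}([0,2π] × [0,T]) satisfy u(0,t) = u(2π,t), ∂u/∂x(0,t) = ∂u/∂x(2π,t) for all t ∈ [0,T], ∫₀^{2π} u(x,0) dx = 1, and the equation ∂u/∂t(x,t) = u(x,t)·(k(x)·u_per(x−h,t) − f(t)) + α ∂²u/∂x²(x,t) for all (x,t) ∈ [0,2π] × [0,T], where f(t) = ∫₀^{2π} k(ξ) u(ξ,t) u_per(ξ−h,t) dξ and u_per(y,t) = u(y+2π,t) for y < 0 and u(y,t) for y ≥ 0. Then ∫₀^{2π} u(x,t) dx = 1 for all t ∈ [0,T]. -/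
open Set MeasureTheory Real

noncomputable section

/-- Continuity of a slice in the first variable. -/
lemma sliceX {f : ℝ → ℝ → ℝ} {A B : Set ℝ}
    (hf : ContinuousOn (fun p : ℝ × ℝ => f p.1 p.2) (A ×ˢ B)) {s : ℝ} (hs : s ∈ B) :
    ContinuousOn (fun x => f x s) A := by
  have : (fun x => f x s) = (fun p : ℝ × ℝ => f p.1 p.2) ∘ (fun x => (x, s)) := rfl
  rw [this]
  exact hf.comp (Continuous.continuousOn (by fun_prop)) (fun x hx => ⟨hx, hs⟩)

/-- Continuity of a slice in the second variable. -/
lemma sliceT {f : ℝ → ℝ → ℝ} {A B : Set ℝ}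
    (hf : ContinuousOn (fun p : ℝ × ℝ => f p.1 p.2) (A ×ˢ B)) {x : ℝ} (hx : x ∈ A) :
    ContinuousOn (fun s => f x s) B := by
  have : (fun s => f x s) = (fun p : ℝ × ℝ => f p.1 p.2) ∘ (fun s => (x, s)) := rfl
  rw [this]
  exact hf.comp (Continuous.continuousOn (by fun_prop)) (fun s hs => ⟨hx, hs⟩)

open Topology

/-- conservation of total mass for solutions of the distributed
hypercycle equation with periodic boundary conditions. -/
theorem stmt3 (h α T : ℝ) (hh : h ∈ Ioo 0 (2 * π)) (hα : 0 < α) (hT : 0 < T)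
    (k : ℝ → ℝ) (hk : ContinuousOn k (Icc 0 (2 * π)))
    (u ux uxx ut : ℝ → ℝ → ℝ)
    (hC21 : IsC21 T u ux uxx ut)
    (hbc0 : ∀ t ∈ Icc (0:ℝ) T, u 0 t = u (2 * π) t)
    (hbc1 : ∀ t ∈ Icc (0:ℝ) T, ux 0 t = ux (2 * π) t)
    (hinit : ∫ x in (0:ℝ)..(2 * π), u x 0 = 1)
    (hpde : ∀ x ∈ Icc (0:ℝ) (2 * π), ∀ t ∈ Icc (0:ℝ) T,
      ut x t = u x t * (k x * uper u (x - h) t - meanFitness k h u t) + α * uxx x t) :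
    ∀ t ∈ Icc (0:ℝ) T, ∫ x in (0:ℝ)..(2 * π), u x t = 1 := by
  have hπ : (0:ℝ) < 2 * π := by positivity
  obtain ⟨hh0, hh2⟩ := hh
  set Mt : ℝ → ℝ := fun t => ∫ x in (0:ℝ)..(2 * π), u x t with hMt
  set G : ℝ → ℝ := fun s => ∫ x in (0:ℝ)..(2 * π), ut x s with hGdef
  -- slice continuity
  have hcu : ∀ s ∈ Icc (0:ℝ) T, ContinuousOn (fun x => u x s) (Icc 0 (2 * π)) :=
    fun s hs => sliceX hC21.cont_u hs
  have hcux : ∀ s ∈ Icc (0:ℝ) T, ContinuousOn (fun x => ux x s) (Icc 0 (2 * π)) :=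
    fun s hs => sliceX hC21.cont_ux hs
  have hcuxx : ∀ s ∈ Icc (0:ℝ) T, ContinuousOn (fun x => uxx x s) (Icc 0 (2 * π)) :=
    fun s hs => sliceX hC21.cont_uxx hs
  have hcut : ∀ x ∈ Icc (0:ℝ) (2 * π), ContinuousOn (fun s => ut x s) (Icc 0 T) :=
    fun x hx => sliceT hC21.cont_ut hx
  have hcuT : ∀ x ∈ Icc (0:ℝ) (2 * π), ContinuousOn (fun s => u x s) (Icc 0 T) :=
    fun x hx => sliceT hC21.cont_u hx
  -- continuity of the delayed factor in the space variable
  have hcup : ∀ s ∈ Icc (0:ℝ) T, ContinuousOn (fun x => uper u (x - h) s) (Icc 0 (2 * π)) := by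
    intro s hs
    have hset : {x : ℝ | x - h < 0} = Iio h := by ext x; simp [sub_neg]
    have hset' : {x : ℝ | ¬ x - h < 0} = Ici h := by
      ext x; simp [not_lt, sub_nonneg]
    have hrepr : (fun x => uper u (x - h) s)
        = fun x => if x - h < 0 then u (x - h + 2 * π) s else u (x - h) s := by
      funext x; simp [uper]
    rw [hrepr]
    apply ContinuousOn.if
    · intro a ha
      rw [hset, frontier_Iio] at ha
      have ha' : a = h := ha.2
      subst ha'
      simp only [sub_self, zero_add]
      exact (hbc0 s hs).symm
    · rw [hset, closure_Iio]
      refine (hcu s hs).comp (Continuous.continuousOn (by fun_prop)) ?_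
      rintro x ⟨hx1, hx2⟩
      have hx2' : x ≤ h := hx2
      simp only [mem_Icc] at hx1 ⊢
      constructor <;> linarith [hx1.1, hx1.2]
    · rw [hset', IsClosed.closure_eq isClosed_Ici]
      refine (hcu s hs).comp (Continuous.continuousOn (by fun_prop)) ?_
      rintro x ⟨hx1, hx2⟩
      have hx2' : h ≤ x := hx2
      simp only [mem_Icc] at hx1 ⊢
      constructor <;> linarith [hx1.1, hx1.2]
  -- Step A: pointwise value of the spatial integral of `ut`
  have hA : ∀ s ∈ Icc (0:ℝ) T, G s = meanFitness k h u s * (1 - Mt s) := by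
    intro s hs
    have hi1 : IntervalIntegrable (fun x => k x * u x s * uper u (x - h) s) volume 0 (2 * π) :=
      ContinuousOn.intervalIntegrable_of_Icc hπ.le ((hk.mul (hcu s hs)).mul (hcup s hs))
    have hi2 : IntervalIntegrable (fun x => meanFitness k h u s * u x s) volume 0 (2 * π) :=
      ContinuousOn.intervalIntegrable_of_Icc hπ.le (continuousOn_const.mul (hcu s hs))
    have hi3 : IntervalIntegrable (fun x => α * uxx x s) volume 0 (2 * π) :=
      ContinuousOn.intervalIntegrable_of_Icc hπ.le (continuousOn_const.mul (hcuxx s hs))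
    have hxx0 : (∫ x in (0:ℝ)..(2 * π), uxx x s) = 0 := by
      have hFTC := intervalIntegral.integral_eq_sub_of_hasDeriv_right_of_le hπ.le (hcux s hs)
        (fun x hx => ((hC21.hasDeriv_xx s hs x (Ioo_subset_Icc_self hx)).hasDerivAt
          (Icc_mem_nhds hx.1 hx.2)).hasDerivWithinAt)
        (ContinuousOn.intervalIntegrable_of_Icc hπ.le (hcuxx s hs))
      rw [hFTC, ← hbc1 s hs, sub_self]
    have heq : EqOn (fun x => ut x s)
        (fun x => k x * u x s * uper u (x - h) s
          - meanFitness k h u s * u x s + α * uxx x s) (uIcc (0:ℝ) (2 * π)) := by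
      intro x hx
      rw [uIcc_of_le hπ.le] at hx
      simp only
      rw [hpde x hx s hs]; ring
    have hGs : G s = ∫ x in (0:ℝ)..(2 * π), (k x * u x s * uper u (x - h) s
        - meanFitness k h u s * u x s + α * uxx x s) := intervalIntegral.integral_congr heq
    rw [hGs, intervalIntegral.integral_add (hi1.sub hi2) hi3,
      intervalIntegral.integral_sub hi1 hi2, intervalIntegral.integral_const_mul,
      intervalIntegral.integral_const_mul, hxx0]
    have h1 : (∫ x in (0:ℝ)..(2 * π), k x * u x s * uper u (x - h) s) = meanFitness k h u s := rfl
    have h2 : (∫ x in (0:ℝ)..(2 * π), u x s) = Mt s := rfl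
    rw [h1, h2]
    ring
  -- Step B: FTC in time plus Fubini
  have hB : ∀ t ∈ Icc (0:ℝ) T, Mt t - 1 = ∫ s in (0:ℝ)..t, G s := by
    intro t ht
    have hIut : IntegrableOn (fun p : ℝ × ℝ => ut p.1 p.2) (Icc 0 (2 * π) ×ˢ Icc 0 T) volume :=
      hC21.cont_ut.integrableOn_compact (isCompact_Icc.prod isCompact_Icc)
    have hprod : Integrable (Function.uncurry fun x s => ut x s)
        ((volume.restrict (Ioc 0 (2 * π))).prod (volume.restrict (Ioc 0 t))) := by
      rw [Measure.prod_restrict, ← Measure.volume_eq_prod]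
      exact hIut.mono_set (prod_mono Ioc_subset_Icc_self
        ((Ioc_subset_Icc_self).trans (Icc_subset_Icc le_rfl ht.2)))
    have hswap : (∫ x in Ioc (0:ℝ) (2 * π), ∫ s in Ioc (0:ℝ) t, ut x s)
        = ∫ s in Ioc (0:ℝ) t, ∫ x in Ioc (0:ℝ) (2 * π), ut x s :=
      MeasureTheory.integral_integral_swap hprod
    have hfub : (∫ x in (0:ℝ)..(2 * π), ∫ s in (0:ℝ)..t, ut x s) = ∫ s in (0:ℝ)..t, G s := by
      simp only [hGdef]
      rw [intervalIntegral.integral_of_le hπ.le, intervalIntegral.integral_of_le ht.1]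
      simp_rw [intervalIntegral.integral_of_le ht.1, intervalIntegral.integral_of_le hπ.le]
      exact hswap
    have hFTC : ∀ x ∈ Icc (0:ℝ) (2 * π), (∫ s in (0:ℝ)..t, ut x s) = u x t - u x 0 := by
      intro x hx
      refine intervalIntegral.integral_eq_sub_of_hasDeriv_right_of_le ht.1
        ((hcuT x hx).mono (Icc_subset_Icc le_rfl ht.2)) ?_ ?_
      · intro s hs
        have hsT : s ∈ Icc (0:ℝ) T := ⟨hs.1.le, (hs.2.trans_le ht.2).le⟩
        exact ((hC21.hasDeriv_t s hsT x hx).hasDerivAt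
          (Icc_mem_nhds hs.1 (hs.2.trans_le ht.2))).hasDerivWithinAt
      · exact ContinuousOn.intervalIntegrable_of_Icc ht.1
          ((hcut x hx).mono (Icc_subset_Icc le_rfl ht.2))
    have hiu_t : IntervalIntegrable (fun x => u x t) volume 0 (2 * π) :=
      ContinuousOn.intervalIntegrable_of_Icc hπ.le (hcu t ht)
    have hiu_0 : IntervalIntegrable (fun x => u x 0) volume 0 (2 * π) :=
      ContinuousOn.intervalIntegrable_of_Icc hπ.le (hcu 0 ⟨le_rfl, hT.le⟩)
    calc Mt t - 1 = ∫ x in (0:ℝ)..(2 * π), (u x t - u x 0) := by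
          rw [intervalIntegral.integral_sub hiu_t hiu_0, hinit]
      _ = ∫ x in (0:ℝ)..(2 * π), ∫ s in (0:ℝ)..t, ut x s := by
          refine (intervalIntegral.integral_congr ?_).symm
          intro x hx
          rw [uIcc_of_le hπ.le] at hx
          exact hFTC x hx
      _ = ∫ s in (0:ℝ)..t, G s := hfub
  -- Step C: integrability of G on (0, T]
  have hGint : IntegrableOn G (Ioc 0 T) := by
    have hIut : IntegrableOn (fun p : ℝ × ℝ => ut p.1 p.2) (Icc 0 (2 * π) ×ˢ Icc 0 T) volume :=
      hC21.cont_ut.integrableOn_compact (isCompact_Icc.prod isCompact_Icc)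
    have hprod : Integrable (Function.uncurry fun x s => ut x s)
        ((volume.restrict (Ioc 0 (2 * π))).prod (volume.restrict (Ioc 0 T))) := by
      rw [Measure.prod_restrict, ← Measure.volume_eq_prod]
      exact hIut.mono_set (prod_mono Ioc_subset_Icc_self Ioc_subset_Icc_self)
    have hmarg := hprod.integral_prod_right
    have hGeq : G = fun s => ∫ x in Ioc (0:ℝ) (2 * π), ut x s := by
      funext s
      simp only [hGdef]
      exact intervalIntegral.integral_of_le hπ.le
    rw [IntegrableOn, hGeq]
    exact hmarg
  -- Step D: continuity of Mt
  have hMcont : ContinuousOn Mt (Icc 0 T) := by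
    have h1 : IntegrableOn G (uIcc 0 T) := by
      rw [uIcc_of_le hT.le, integrableOn_Icc_iff_integrableOn_Ioc]
      exact hGint
    have h2 := intervalIntegral.continuousOn_primitive_interval h1
    rw [uIcc_of_le hT.le] at h2
    have h3 : ∀ t ∈ Icc (0:ℝ) T, Mt t = 1 + ∫ s in (0:ℝ)..t, G s := fun t ht => by
      have := hB t ht; linarith
    exact (continuousOn_const.add h2).congr h3
  -- Step E: a uniform bound for the mean fitness
  obtain ⟨Bu, hBu⟩ := (isCompact_Icc.prod isCompact_Icc).exists_bound_of_continuousOn hC21.cont_u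
  obtain ⟨Bk, hBk⟩ := isCompact_Icc.exists_bound_of_continuousOn hk
  have hBu0 : 0 ≤ Bu :=
    le_trans (norm_nonneg _) (hBu (0, 0) ⟨⟨le_rfl, hπ.le⟩, ⟨le_rfl, hT.le⟩⟩)
  have hBk0 : 0 ≤ Bk := le_trans (norm_nonneg _) (hBk 0 ⟨le_rfl, hπ.le⟩)
  set K : ℝ := Bk * Bu * Bu * (2 * π) with hK
  have hK0 : 0 ≤ K := by positivity
  have hmf : ∀ s ∈ Icc (0:ℝ) T, |meanFitness k h u s| ≤ K := by
    intro s hs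
    have hbd : ‖∫ ξ in (0:ℝ)..(2 * π), k ξ * u ξ s * uper u (ξ - h) s‖
        ≤ (Bk * Bu * Bu) * |2 * π - 0| := by
      apply intervalIntegral.norm_integral_le_of_norm_le_const
      intro x hx
      rw [uIoc_of_le hπ.le] at hx
      have hx' : x ∈ Icc (0:ℝ) (2 * π) := ⟨hx.1.le, hx.2⟩
      have h1 : ‖k x‖ ≤ Bk := hBk x hx'
      have h2 : ‖u x s‖ ≤ Bu := hBu (x, s) ⟨hx', hs⟩
      have h3 : ‖uper u (x - h) s‖ ≤ Bu := by
        rw [uper]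
        split_ifs with hcase
        · refine hBu (x - h + 2 * π, s) ⟨?_, hs⟩
          simp only [mem_Icc]
          exact ⟨by linarith [hx'.1], by linarith⟩
        · have h0 : (0:ℝ) ≤ x - h := by linarith [not_lt.mp hcase]
          refine hBu (x - h, s) ⟨?_, hs⟩
          simp only [mem_Icc]
          exact ⟨h0, by linarith [hx'.2]⟩
      calc ‖k x * u x s * uper u (x - h) s‖
          = ‖k x‖ * ‖u x s‖ * ‖uper u (x - h) s‖ := by rw [norm_mul, norm_mul]
        _ ≤ Bk * Bu * Bu :=
            mul_le_mul (mul_le_mul h1 h2 (norm_nonneg _) hBk0) h3 (norm_nonneg _)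
              (by positivity)
    have habs : |meanFitness k h u s|
        = ‖∫ ξ in (0:ℝ)..(2 * π), k ξ * u ξ s * uper u (ξ - h) s‖ := rfl
    rw [habs]
    calc ‖∫ ξ in (0:ℝ)..(2 * π), k ξ * u ξ s * uper u (ξ - h) s‖
        ≤ (Bk * Bu * Bu) * |2 * π - 0| := hbd
      _ = K := by rw [sub_zero, abs_of_pos hπ, hK]
  -- Step F: Gronwall argument
  set φ : ℝ → ℝ := fun t => |Mt t - 1| with hφ
  set ψ : ℝ → ℝ := fun t => ∫ s in (0:ℝ)..t, φ s with hψ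
  have hφnonneg : ∀ t, 0 ≤ φ t := fun t => abs_nonneg _
  have hφcont : ContinuousOn φ (Icc 0 T) := (hMcont.sub continuousOn_const).abs
  have hφint : IntegrableOn φ (uIcc 0 T) := by
    rw [uIcc_of_le hT.le]
    exact hφcont.integrableOn_compact isCompact_Icc
  have hψcont : ContinuousOn ψ (Icc 0 T) := by
    have := intervalIntegral.continuousOn_primitive_interval hφint
    rwa [uIcc_of_le hT.le] at this
  have hψnonneg : ∀ t ∈ Icc (0:ℝ) T, 0 ≤ ψ t := fun t ht =>
    intervalIntegral.integral_nonneg ht.1 (fun s _ => hφnonneg s)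
  have hφK : ∀ t ∈ Icc (0:ℝ) T, φ t ≤ K * ψ t := by
    intro t ht
    have hGt : IntervalIntegrable G volume 0 t := by
      rw [intervalIntegrable_iff, uIoc_of_le ht.1]
      exact hGint.mono_set (Ioc_subset_Ioc le_rfl ht.2)
    have h1 : φ t = |∫ s in (0:ℝ)..t, G s| := by
      simp only [hφ]
      rw [hB t ht]
    have h2 : |∫ s in (0:ℝ)..t, G s| ≤ ∫ s in (0:ℝ)..t, |G s| :=
      intervalIntegral.abs_integral_le_integral_abs ht.1
    have h3 : (∫ s in (0:ℝ)..t, |G s|) ≤ ∫ s in (0:ℝ)..t, K * φ s := by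
      refine intervalIntegral.integral_mono_on ht.1 hGt.abs
        (ContinuousOn.intervalIntegrable_of_Icc ht.1
          (continuousOn_const.mul (hφcont.mono (Icc_subset_Icc le_rfl ht.2)))) ?_
      intro s hs
      have hsT : s ∈ Icc (0:ℝ) T := ⟨hs.1, hs.2.trans ht.2⟩
      rw [hA s hsT, abs_mul]
      have h4 : |1 - Mt s| = φ s := by
        simp only [hφ]
        rw [abs_sub_comm]
      rw [h4]
      exact mul_le_mul_of_nonneg_right (hmf s hsT) (hφnonneg s)
    have h5 : (∫ s in (0:ℝ)..t, K * φ s) = K * ψ t := by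
      simp only [hψ]
      exact intervalIntegral.integral_const_mul K φ
    linarith [h1 ▸ le_trans h2 (h3.trans h5.le)]
  have hψderiv : ∀ t ∈ Ico (0:ℝ) T, HasDerivWithinAt ψ (φ t) (Ici t) t := by
    intro t ht
    have htT : t < T := ht.2
    have hIcc : Icc t T ⊆ Icc (0:ℝ) T := Icc_subset_Icc ht.1 le_rfl
    have hmemIcc : Icc t T ∈ 𝓝[Ici t] t := by
      rw [← nhdsWithin_Icc_eq_nhdsGE htT]
      exact self_mem_nhdsWithin
    have hφt : IntervalIntegrable φ volume t T :=
      ContinuousOn.intervalIntegrable_of_Icc htT.le (hφcont.mono hIcc)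
    have hmeas : StronglyMeasurableAtFilter φ (𝓝[Ici t] t) :=
      ⟨Icc t T, hmemIcc, (hφcont.mono hIcc).aestronglyMeasurable measurableSet_Icc⟩
    have hcw : ContinuousWithinAt φ (Ici t) t :=
      ((hφcont.mono hIcc) t (left_mem_Icc.mpr htT.le)).mono_of_mem_nhdsWithin hmemIcc
    have hmemIoi : Icc t T ∈ 𝓝[Ioi t] t := nhdsWithin_mono t Ioi_subset_Ici_self hmemIcc
    have hmeas' : StronglyMeasurableAtFilter φ (𝓝[Ioi t] t) :=
      ⟨Icc t T, hmemIoi, (hφcont.mono hIcc).aestronglyMeasurable measurableSet_Icc⟩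
    have hcw' : ContinuousWithinAt φ (Ioi t) t := hcw.mono Ioi_subset_Ici_self
    have hleft := intervalIntegral.integral_hasDerivWithinAt_left (s := Ici t) (t := Ioi t) hφt hmeas' hcw'
    have hw : HasDerivWithinAt
        (fun r => (∫ s in (0:ℝ)..T, φ s) - ∫ s in r..T, φ s) (φ t) (Ici t) t := by
      have := hleft.const_sub (∫ s in (0:ℝ)..T, φ s)
      simpa using this
    have hev : ψ =ᶠ[𝓝[Ici t] t] fun r => (∫ s in (0:ℝ)..T, φ s) - ∫ s in r..T, φ s := by
      filter_upwards [hmemIcc] with r hr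
      have hr' : r ∈ Icc (0:ℝ) T := hIcc hr
      have hadd : (∫ s in (0:ℝ)..r, φ s) + (∫ s in r..T, φ s) = ∫ s in (0:ℝ)..T, φ s :=
        intervalIntegral.integral_add_adjacent_intervals
          (ContinuousOn.intervalIntegrable_of_Icc hr'.1
            (hφcont.mono (Icc_subset_Icc le_rfl hr'.2)))
          (ContinuousOn.intervalIntegrable_of_Icc hr'.2
            (hφcont.mono (Icc_subset_Icc hr'.1 le_rfl)))
      simp only [hψ]
      linarith
    have heq : ψ t = (∫ s in (0:ℝ)..T, φ s) - ∫ s in t..T, φ s :=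
      hev.self_of_nhdsWithin (mem_Ici.mpr le_rfl)
    exact hw.congr_of_eventuallyEq hev heq
  have hgron := norm_le_gronwallBound_of_norm_deriv_right_le (f := ψ) (f' := φ)
    (δ := 0) (K := K) (ε := 0) hψcont hψderiv
    (by simp only [hψ]; rw [intervalIntegral.integral_same]; simp)
    (by
      intro t ht
      have htIcc : t ∈ Icc (0:ℝ) T := ⟨ht.1, ht.2.le⟩
      rw [Real.norm_eq_abs, Real.norm_eq_abs, abs_of_nonneg (hφnonneg t),
        abs_of_nonneg (hψnonneg t htIcc), add_zero]
      exact hφK t htIcc)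
  intro t ht
  have hψ0 : ψ t = 0 := by
    have h6 := hgron t ht
    rw [gronwallBound_ε0, Real.norm_eq_abs, abs_of_nonneg (hψnonneg t ht)] at h6
    have := hψnonneg t ht
    nlinarith [Real.exp_pos (K * (t - 0))]
  have h7 : φ t ≤ 0 := by
    have := hφK t ht
    rw [hψ0] at this
    linarith
  have h8 : φ t = 0 := le_antisymm h7 (hφnonneg t)
  have h9 : Mt t = 1 := by
    have := abs_eq_zero.mp (by simpa only [hφ] using h8)
    linarith [sub_eq_zero.mp this]
  exact h9
end
end

section
/- Let k > 0, α > 0, h ∈ ℝ, n ∈ ℤ, and c ∈ ℂ. Then the function ψ : ℝ × ℝ → ℂ defined by ψ(x,t) = c · exp((k e^{inh} − α n²) t) · e^{−inx} satisfies ∂ψ/∂t(x,t) = k ψ(x−h, t) + α ∂²ψ/∂x²(x,t) for all (x,t) ∈ ℝ × ℝ. In particular, for n = 0 and c ≠ 0 one has |ψ(x,t)| = |c| e^{kt} → ∞ as t → +∞, so the linearized equation admits solutions growing without bound. -/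
open Complex Filter

noncomputable section

/-- The Fourier-mode solution `ψ(x,t) = c · exp((k e^{inh} − α n²) t) · e^{−inx}` of the
linearized distributed hypercycle equation. -/
def ψmode (k α h : ℝ) (n : ℤ) (c : ℂ) (x t : ℝ) : ℂ :=
  c * Complex.exp (((k : ℂ) * Complex.exp (Complex.I * (n : ℂ) * (h : ℂ)) -
      (α : ℂ) * (n : ℂ) ^ 2) * (t : ℂ)) * Complex.exp (-(Complex.I * (n : ℂ) * (x : ℂ)))

lemma ψmode_x_deriv (k α h : ℝ) (n : ℤ) (c : ℂ) (t : ℝ) (z : ℝ) :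
    HasDerivAt (fun z : ℝ => ψmode k α h n c z t)
      ((-(Complex.I * (n : ℂ))) * ψmode k α h n c z t) z := by
  have hz : HasDerivAt (fun z : ℝ => (z : ℂ)) 1 z := Complex.ofRealCLM.hasDerivAt
  have h1 : HasDerivAt (fun z : ℝ => -(Complex.I * (n : ℂ) * (z : ℂ)))
      (-(Complex.I * (n : ℂ))) z := by
    simpa using ((hz.const_mul (Complex.I * (n : ℂ))).fun_neg)
  have h2 := (h1.cexp).const_mul
    (c * Complex.exp (((k : ℂ) * Complex.exp (Complex.I * (n : ℂ) * (h : ℂ)) -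
      (α : ℂ) * (n : ℂ) ^ 2) * (t : ℂ)))
  simpa [ψmode, mul_assoc, mul_comm, mul_left_comm] using h2

/-- `ψ` solves `∂ψ/∂t = k ψ(x−h,t) + α ∂²ψ/∂x²`, and for the mode
`n = 0` with `c ≠ 0` one has `|ψ(x,t)| = |c| e^{kt} → ∞` as `t → +∞`. -/
theorem stmt4 (k α h : ℝ) (hk : 0 < k) (hα : 0 < α) (n : ℤ) (c : ℂ) :
    (∀ x t : ℝ, HasDerivAt (fun s : ℝ => ψmode k α h n c x s)
      ((k : ℂ) * ψmode k α h n c (x - h) t +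
        (α : ℂ) * deriv (fun y : ℝ => deriv (fun z : ℝ => ψmode k α h n c z t) y) x) t) ∧
    (n = 0 → c ≠ 0 →
      (∀ x t : ℝ, ‖ψmode k α h n c x t‖ = ‖c‖ * Real.exp (k * t)) ∧
      (∀ x : ℝ, Tendsto (fun t : ℝ => ‖ψmode k α h n c x t‖) atTop atTop)) := by
  constructor
  · intro x t
    -- first: compute the double x-derivative
    have hd1 : (fun y : ℝ => deriv (fun z : ℝ => ψmode k α h n c z t) y)
        = fun y : ℝ => (-(Complex.I * (n : ℂ))) * ψmode k α h n c y t := by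
      funext y
      exact (ψmode_x_deriv k α h n c t y).deriv
    have hd2 : deriv (fun y : ℝ => deriv (fun z : ℝ => ψmode k α h n c z t) y) x
        = (-(Complex.I * (n : ℂ)))^2 * ψmode k α h n c x t := by
      rw [hd1]
      have := ((ψmode_x_deriv k α h n c t x).const_mul (-(Complex.I * (n : ℂ)))).deriv
      rw [this]; ring
    -- time derivative
    have ht : HasDerivAt (fun s : ℝ => ψmode k α h n c x s)
        (((k : ℂ) * Complex.exp (Complex.I * (n : ℂ) * (h : ℂ)) -
          (α : ℂ) * (n : ℂ) ^ 2) * ψmode k α h n c x t) t := by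
      have hz : HasDerivAt (fun s : ℝ => (s : ℂ)) 1 t := Complex.ofRealCLM.hasDerivAt
      set L : ℂ := (k : ℂ) * Complex.exp (Complex.I * (n : ℂ) * (h : ℂ)) - (α : ℂ) * (n : ℂ) ^ 2
      have h1 : HasDerivAt (fun s : ℝ => L * (s : ℂ)) L t := by
        simpa using hz.const_mul L
      have h2 := h1.cexp
      have h3 := (h2.const_mul c).mul_const (Complex.exp (-(Complex.I * (n : ℂ) * (x : ℂ))))
      have h4 : HasDerivAt (fun s : ℝ => ψmode k α h n c x s)
          (c * (Complex.exp (L * (t : ℂ)) * L) *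
            Complex.exp (-(Complex.I * (n : ℂ) * (x : ℂ)))) t := h3
      convert h4 using 1
      simp only [ψmode]
      ring
    have key : ((k : ℂ) * Complex.exp (Complex.I * (n : ℂ) * (h : ℂ)) -
          (α : ℂ) * (n : ℂ) ^ 2) * ψmode k α h n c x t
        = (k : ℂ) * ψmode k α h n c (x - h) t +
          (α : ℂ) * ((-(Complex.I * (n : ℂ)))^2 * ψmode k α h n c x t) := by
      have hsq : (-(Complex.I * (n : ℂ)))^2 = -((n:ℂ)^2) := by
        have := Complex.I_sq
        ring_nf
        rw [Complex.I_sq]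
        ring
      have hshift : ψmode k α h n c (x - h) t
          = Complex.exp (Complex.I * (n : ℂ) * (h : ℂ)) * ψmode k α h n c x t := by
        simp only [ψmode]
        push_cast
        rw [show -(Complex.I * (n:ℂ) * ((x:ℂ) - (h:ℂ))) =
          Complex.I * (n:ℂ) * (h:ℂ) + -(Complex.I * (n:ℂ) * (x:ℂ)) by ring, Complex.exp_add]
        ring
      rw [hsq, hshift]
      ring
    rw [hd2, ← key]
    exact ht
  · intro hn hc
    subst hn
    have habs : ∀ x t : ℝ, ‖ψmode k α h 0 c x t‖ = ‖c‖ * Real.exp (k * t) := by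
      intro x t
      simp [ψmode, Complex.norm_exp]
    refine ⟨habs, fun x => ?_⟩
    have h1 : Tendsto (fun t : ℝ => Real.exp (k * t)) atTop atTop :=
      Real.tendsto_exp_atTop.comp (tendsto_id.const_mul_atTop hk)
    have h2 : Tendsto (fun t : ℝ => ‖c‖ * Real.exp (k * t)) atTop atTop :=
      h1.const_mul_atTop (norm_pos_iff.mpr hc)
    exact h2.congr fun t => (habs x t).symm
end
end

section
/- Let c₄ > 0 and β ∈ (0, 1) satisfy 7³ β² c₄⁴ ≤ 1 and 7³ β⁵ ≤ 1, and let (a_m)_{m ≥ 1} be a sequence of nonnegative real numbers with a₁ ≤ c₄ + β and a_{m+1} ≤ c₄ + β a_m³ for all m ≥ 1. Then for every m ≥ 2, a_m ≤ c₄ · Σ_{i=0}^{m−1} (7 β c₄²)^i + (7 β⁴)^{m−1}; moreover 7 β c₄² < 1 and 7 β⁴ < 1, so the sequence (a_m) is bounded: a_m ≤ c₄/(1 − 7 β c₄²) + 1 for all m ≥ 2. -/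
/-- Cube inequality for three nonnegative terms. -/
private lemma cube3 (x y z : ℝ) (hx : 0 ≤ x) (hy : 0 ≤ y) (hz : 0 ≤ z) :
    (x + y + z) ^ 3 ≤ 4 * x ^ 3 + 16 * y ^ 3 + 16 * z ^ 3 := by
  have h1 : (x + (y + z)) ^ 3 ≤ 4 * x ^ 3 + 4 * (y + z) ^ 3 := by
    nlinarith [mul_nonneg (add_nonneg hx (add_nonneg hy hz)) (sq_nonneg (x - (y + z)))]
  have h2 : (y + z) ^ 3 ≤ 4 * y ^ 3 + 4 * z ^ 3 := by
    nlinarith [mul_nonneg (add_nonneg hy hz) (sq_nonneg (y - z))]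
  nlinarith

set_option maxHeartbeats 1600000 in
/-- the inductive estimate (A.10) behind Lemma 2: for a sequence with
`a₁ ≤ c₄ + β` and `a_{m+1} ≤ c₄ + β a_m³`, under the smallness conditions
`7³β²c₄⁴ ≤ 1`, `7³β⁵ ≤ 1`, one has
`a_m ≤ c₄ Σ_{i=0}^{m−1} (7βc₄²)^i + (7β⁴)^{m−1}` for `m ≥ 2`, `7βc₄² < 1`, `7β⁴ < 1`,
and hence `a_m ≤ c₄/(1 − 7βc₄²) + 1`. -/
theorem stmt16 (c₄ β : ℝ) (hc₄ : 0 < c₄) (hβ0 : 0 < β) (hβ1 : β < 1)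
    (h1 : 7 ^ 3 * β ^ 2 * c₄ ^ 4 ≤ 1) (h2 : 7 ^ 3 * β ^ 5 ≤ 1)
    (a : ℕ → ℝ) (ha : ∀ m : ℕ, 1 ≤ m → 0 ≤ a m)
    (ha1 : a 1 ≤ c₄ + β)
    (hrec : ∀ m : ℕ, 1 ≤ m → a (m + 1) ≤ c₄ + β * a m ^ 3) :
    (∀ m : ℕ, 2 ≤ m →
      a m ≤ c₄ * (∑ i ∈ Finset.range m, (7 * β * c₄ ^ 2) ^ i) + (7 * β ^ 4) ^ (m - 1)) ∧
    7 * β * c₄ ^ 2 < 1 ∧ 7 * β ^ 4 < 1 ∧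
    (∀ m : ℕ, 2 ≤ m → a m ≤ c₄ / (1 - 7 * β * c₄ ^ 2) + 1) := by
  set q : ℝ := 7 * β * c₄ ^ 2 with hqdef
  set r : ℝ := 7 * β ^ 4 with hrdef
  have hq0 : 0 < q := by rw [hqdef]; positivity
  have hr0 : 0 < r := by rw [hrdef]; positivity
  have hq2 : q ^ 2 ≤ 1 / 7 := by rw [hqdef]; nlinarith
  have hq37 : q ≤ 3 / 7 := by nlinarith
  have hq1 : q < 1 := by linarith
  have hb3 : β ^ 3 < 1 := by nlinarith
  have hr1 : r < 1 := by nlinarith [sq_nonneg (r - 1), pow_pos hβ0 3]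
  have h16br : 16 * β * r ≤ 1 := by rw [hrdef]; nlinarith
  -- the key one-step estimate
  have key : ∀ m : ℕ, 2 ≤ m →
      β * (c₄ * (∑ i ∈ Finset.range m, q ^ i) + r ^ (m - 1)) ^ 3
        ≤ c₄ * q * (∑ i ∈ Finset.range m, q ^ i) + r ^ m := by
    intro m hm
    obtain ⟨k, rfl⟩ : ∃ k, m = k + 2 := ⟨m - 2, by omega⟩
    set T : ℝ := ∑ i ∈ Finset.range (k + 1), q ^ i with hTdef
    have hS : ∑ i ∈ Finset.range (k + 2), q ^ i = q * T + 1 := geom_sum_succ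
    have hT0 : 0 ≤ T := by
      rw [hTdef]; exact Finset.sum_nonneg fun i _ => (pow_pos hq0 i).le
    have hTmul : T * (q - 1) = q ^ (k + 1) - 1 := geom_sum_mul q (k + 1)
    have hTle : T * (1 - q) ≤ 1 := by nlinarith [pow_pos hq0 (k + 1)]
    have hT74 : T ≤ 7 / 4 := by nlinarith
    have hexp : k + 2 - 1 = k + 1 := rfl
    rw [hS, hexp]
    set R : ℝ := r ^ (k + 1) with hRdef
    have hR0 : 0 < R := pow_pos hr0 _
    have hR1 : R ≤ r := by
      rw [hRdef]
      calc r ^ (k + 1) ≤ r ^ 1 := pow_le_pow_of_le_one hr0.le hr1.le (by omega)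
        _ = r := pow_one r
    -- cube bound
    have hcube : (c₄ + c₄ * q * T + R) ^ 3
        ≤ 4 * c₄ ^ 3 + 16 * (c₄ * q * T) ^ 3 + 16 * R ^ 3 :=
      cube3 c₄ (c₄ * q * T) R hc₄.le
        (mul_nonneg (mul_nonneg hc₄.le hq0.le) hT0) hR0.le
    have hb : c₄ * (q * T + 1) + R = c₄ + c₄ * q * T + R := by ring
    rw [hb]
    have hrm : r ^ (k + 2) = r * R := by rw [hRdef]; ring
    -- term 1 : 4 β c₄³ = (4/7) q c₄
    have ht1 : β * (4 * c₄ ^ 3) = (4 / 7) * (c₄ * q) := by rw [hqdef]; ring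
    -- term 2 : 16 β (c₄ q T)³ ≤ c₄ q² T
    have ht2 : β * (16 * (c₄ * q * T) ^ 3) ≤ c₄ * q ^ 2 * T := by
      have e : β * (16 * (c₄ * q * T) ^ 3) = (16 / 7) * (q ^ 2 * T ^ 2) * (c₄ * q ^ 2 * T) := by
        rw [hqdef]; ring
      rw [e]
      have hT2 : T ^ 2 ≤ 49 / 16 := by nlinarith
      have hqt : (16 / 7) * (q ^ 2 * T ^ 2) ≤ 1 := by
        nlinarith [mul_le_mul hq2 hT2 (sq_nonneg T) (by norm_num : (0:ℝ) ≤ 1/7)]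
      have hpos : 0 ≤ c₄ * q ^ 2 * T := by positivity
      exact mul_le_of_le_one_left hpos hqt
    -- term 3 : 16 β R³ ≤ r R
    have ht3 : β * (16 * R ^ 3) ≤ r * R := by
      have hR2 : R ^ 2 ≤ r ^ 2 := by nlinarith
      nlinarith [mul_le_mul_of_nonneg_left hR2 (by positivity : (0:ℝ) ≤ 16 * β * R),
        mul_le_mul_of_nonneg_right h16br (mul_nonneg hr0.le hR0.le)]
    have hmono : β * (c₄ + c₄ * q * T + R) ^ 3
        ≤ β * (4 * c₄ ^ 3 + 16 * (c₄ * q * T) ^ 3 + 16 * R ^ 3) :=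
      mul_le_mul_of_nonneg_left hcube hβ0.le
    have hdist : β * (4 * c₄ ^ 3 + 16 * (c₄ * q * T) ^ 3 + 16 * R ^ 3)
        = β * (4 * c₄ ^ 3) + β * (16 * (c₄ * q * T) ^ 3) + β * (16 * R ^ 3) := by ring
    have htarget : c₄ * q * (q * T + 1) + r ^ (k + 2) = c₄ * q + c₄ * q ^ 2 * T + r * R := by
      rw [hrm]; ring
    rw [htarget]
    have h47 : (4 / 7) * (c₄ * q) ≤ c₄ * q := by nlinarith [mul_pos hc₄ hq0]
    linarith
  -- the main inductive bound
  have main : ∀ m : ℕ, 2 ≤ m →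
      a m ≤ c₄ * (∑ i ∈ Finset.range m, q ^ i) + r ^ (m - 1) := by
    intro m hm
    induction m, hm using Nat.le_induction with
    | base =>
      have h2' := hrec 1 le_rfl
      have ha1' := ha 1 le_rfl
      have hcube : a 1 ^ 3 ≤ (c₄ + β) ^ 3 := by
        apply pow_le_pow_left₀ ha1' ha1
      have hS2 : ∑ i ∈ Finset.range 2, q ^ i = 1 + q := by
        simp [Finset.sum_range_succ]
      rw [hS2, pow_one]
      -- β (c₄+β)³ ≤ 4βc₄³ + 4β⁴ = (4/7) q c₄ + (4/7) r ≤ q c₄ + r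
      have hc : (c₄ + β) ^ 3 ≤ 4 * c₄ ^ 3 + 4 * β ^ 3 := by
        nlinarith [mul_nonneg (add_nonneg hc₄.le hβ0.le) (sq_nonneg (c₄ - β))]
      have e1 : β * (4 * c₄ ^ 3) = (4 / 7) * (q * c₄) := by rw [hqdef]; ring
      have e2 : β * (4 * β ^ 3) = (4 / 7) * r := by rw [hrdef]; ring
      nlinarith [mul_pos hq0 hc₄]
    | succ n hn ih =>
      have hrec' := hrec n (by omega)
      have han := ha n (by omega)
      have hbd0 : 0 ≤ c₄ * (∑ i ∈ Finset.range n, q ^ i) + r ^ (n - 1) := by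
        have : (0:ℝ) ≤ ∑ i ∈ Finset.range n, q ^ i :=
          Finset.sum_nonneg fun i _ => (pow_pos hq0 i).le
        positivity
      have hcube : a n ^ 3 ≤ (c₄ * (∑ i ∈ Finset.range n, q ^ i) + r ^ (n - 1)) ^ 3 :=
        pow_le_pow_left₀ han ih 3
      have hkey := key n hn
      have hSrec : ∑ i ∈ Finset.range (n + 1), q ^ i
          = q * (∑ i ∈ Finset.range n, q ^ i) + 1 := geom_sum_succ
      have hexp : n + 1 - 1 = n := rfl
      rw [hSrec, hexp]
      have hstep : a (n + 1) ≤ c₄ + β * (c₄ * (∑ i ∈ Finset.range n, q ^ i) + r ^ (n - 1)) ^ 3 := by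
        nlinarith
      have hn1 : n - 1 + 1 = n := by omega
      have hrn : r ^ (n - 1) * r = r ^ n := by
        rw [← pow_succ, hn1]
      nlinarith
  refine ⟨main, hq1, hr1, ?_⟩
  intro m hm
  have hmain := main m hm
  have hS : (∑ i ∈ Finset.range m, q ^ i) * (q - 1) = q ^ m - 1 := geom_sum_mul q m
  have hS0 : (0:ℝ) ≤ ∑ i ∈ Finset.range m, q ^ i :=
    Finset.sum_nonneg fun i _ => (pow_pos hq0 i).le
  have hSle : (∑ i ∈ Finset.range m, q ^ i) * (1 - q) ≤ 1 := by
    nlinarith [pow_pos hq0 m]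
  have hrle : r ^ (m - 1) ≤ 1 := pow_le_one₀ hr0.le hr1.le
  have hdiv : c₄ * (∑ i ∈ Finset.range m, q ^ i) ≤ c₄ / (1 - q) := by
    rw [le_div_iff₀ (by linarith)]
    nlinarith
  linarith
end
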